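/- arXiv:2303.13695 — 8 statements merged into one kernel-verified Lean document; each statement's English description precedes it below -/
import Mathlib

section
/- If f1 and f2 are polynomials with nonnegative integer coefficients, each top-heavy (meaning [q^i]f ≤ [q^{d-i}]f for all 0 ≤ i ≤ d/2 where d = deg f), then h(f1·f2) = min(h(f1), h(f2)), where h(f) := min{0 ≤ i ≤ d/2 : [q^i]f < [q^{d-i}]f} (with h(f) = +∞ if f is palindromic). -/
open Polynomial

/-- A polynomial `f ∈ ℕ[q]` of degree `d` is *top-heavy* if `[q^i]f ≤ [q^{d-i}]f`
for all `0 ≤ i ≤ d/2`. -/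
def TopHeavy (f : Polynomial ℕ) : Prop :=
  ∀ i : ℕ, i ≤ f.natDegree / 2 → f.coeff i ≤ f.coeff (f.natDegree - i)

/-- `h(f) = min {0 ≤ i ≤ d/2 : [q^i]f < [q^{d-i}]f}`, with the convention
`h(f) = +∞` (the infimum of the empty set in `ℕ∞`) when `f` is palindromic. -/
noncomputable def polyH (f : Polynomial ℕ) : ℕ∞ :=
  sInf ((↑) '' {i : ℕ | i ≤ f.natDegree / 2 ∧ f.coeff i < f.coeff (f.natDegree - i)})

/-- below `polyH f`, coefficients are palindromic (for `i ≤ d/2`). -/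
lemma eqA {f : Polynomial ℕ} (hf : TopHeavy f) {i : ℕ} (hi : i ≤ f.natDegree / 2)
    (hlt : (i : ℕ∞) < polyH f) : f.coeff i = f.coeff (f.natDegree - i) := by
  refine le_antisymm (hf i hi) ?_
  by_contra hc
  push_neg at hc
  have hmem : (i : ℕ∞) ∈ ((↑) '' {i : ℕ | i ≤ f.natDegree / 2 ∧
      f.coeff i < f.coeff (f.natDegree - i)}) := ⟨i, ⟨hi, hc⟩, rfl⟩
  exact absurd (sInf_le hmem) (not_le.mpr hlt)

lemma half_of_le_sub {j d : ℕ} (hj : j ≤ d - j) (hjd : j ≤ d) : j ≤ d / 2 := by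
  rw [Nat.le_div_iff_mul_le (by norm_num)]
  omega

/-- reflect fixes coefficients strictly below `polyH`. -/
lemma refl_coeff {f : Polynomial ℕ} (hf : TopHeavy f) {j : ℕ}
    (hj : (j : ℕ∞) < polyH f) :
    (Polynomial.reflect f.natDegree f).coeff j = f.coeff j := by
  rw [Polynomial.coeff_reflect]
  by_cases hjd : j ≤ f.natDegree
  · rw [Polynomial.revAt_le hjd]
    rcases le_or_gt j (f.natDegree - j) with h | h
    · exact (eqA hf (half_of_le_sub h hjd) hj).symm
    · have h2 : f.natDegree - (f.natDegree - j) = j := by omega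
      have h3 : ((f.natDegree - j : ℕ) : ℕ∞) < polyH f :=
        lt_of_le_of_lt (by exact_mod_cast h.le) hj
      have := eqA hf (half_of_le_sub (by omega) (by omega)) h3
      rw [h2] at this
      exact this
  · rw [Polynomial.revAt_eq_self_of_lt (by omega)]

/-- reflect does not decrease coefficients at or below `polyH`. -/
lemma refl_coeff_le {f : Polynomial ℕ} (hf : TopHeavy f) {j : ℕ}
    (hj : (j : ℕ∞) ≤ polyH f) :
    f.coeff j ≤ (Polynomial.reflect f.natDegree f).coeff j := by
  rw [Polynomial.coeff_reflect]
  by_cases hjd : j ≤ f.natDegree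
  · rw [Polynomial.revAt_le hjd]
    rcases le_or_gt j (f.natDegree - j) with h | h
    · exact hf j (half_of_le_sub h hjd)
    · have h2 : f.natDegree - (f.natDegree - j) = j := by omega
      have h3 : ((f.natDegree - j : ℕ) : ℕ∞) < polyH f :=
        lt_of_lt_of_le (by exact_mod_cast h) hj
      have := eqA hf (half_of_le_sub (by omega) (by omega)) h3
      rw [h2] at this
      exact this.ge
  · rw [Polynomial.revAt_eq_self_of_lt (by omega)]

lemma coeff_prod_rev (f1 f2 : Polynomial ℕ) (hf1 : f1 ≠ 0) (hf2 : f2 ≠ 0) {i : ℕ}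
    (hi : i ≤ (f1 * f2).natDegree) :
    (f1 * f2).coeff ((f1 * f2).natDegree - i) =
      ∑ x ∈ Finset.HasAntidiagonal.antidiagonal i,
        (Polynomial.reflect f1.natDegree f1).coeff x.1 *
        (Polynomial.reflect f2.natDegree f2).coeff x.2 := by
  have hd : (f1 * f2).natDegree = f1.natDegree + f2.natDegree :=
    Polynomial.natDegree_mul hf1 hf2
  rw [← Polynomial.revAt_le hi, ← Polynomial.coeff_reflect, hd,
    Polynomial.reflect_mul f1 f2 le_rfl le_rfl, Polynomial.coeff_mul]

/-- main auxiliary lemma, asymmetric version. -/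
lemma aux (f1 f2 : Polynomial ℕ) (hf1 : f1 ≠ 0) (hf2 : f2 ≠ 0)
    (h1 : TopHeavy f1) (h2 : TopHeavy f2) (h12 : polyH f1 ≤ polyH f2) :
    polyH (f1 * f2) = polyH f1 := by
  have hd : (f1 * f2).natDegree = f1.natDegree + f2.natDegree :=
    Polynomial.natDegree_mul hf1 hf2
  -- lower bound
  have hge : polyH f1 ≤ polyH (f1 * f2) := by
    refine le_sInf ?_
    rintro x ⟨i, ⟨hi2, hilt⟩, rfl⟩
    by_contra hc
    push_neg at hc
    have hi : i ≤ (f1 * f2).natDegree := le_trans hi2 (Nat.div_le_self _ _)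
    rw [coeff_prod_rev f1 f2 hf1 hf2 hi, Polynomial.coeff_mul] at hilt
    refine absurd hilt (not_lt.mpr (le_of_eq (Finset.sum_congr rfl ?_)))
    rintro ⟨j, k⟩ hjk
    rw [Finset.HasAntidiagonal.mem_antidiagonal] at hjk
    have hj1 : (j : ℕ∞) < polyH f1 := lt_of_le_of_lt (by exact_mod_cast (by omega : j ≤ i)) hc
    have hk2 : (k : ℕ∞) < polyH f2 :=
      lt_of_le_of_lt (by exact_mod_cast (by omega : k ≤ i)) (lt_of_lt_of_le hc h12)
    rw [refl_coeff h1 hj1, refl_coeff h2 hk2]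
  refine le_antisymm ?_ hge
  -- upper bound
  rcases eq_or_ne (polyH f1) ⊤ with htop | htop
  · rw [htop]; exact le_top
  · -- polyH f1 is attained at some natural m
    set S1 : Set ℕ∞ := ((↑) '' {i : ℕ | i ≤ f1.natDegree / 2 ∧
      f1.coeff i < f1.coeff (f1.natDegree - i)}) with hS1
    have hne : S1.Nonempty := by
      by_contra hemp
      rw [Set.not_nonempty_iff_eq_empty] at hemp
      exact htop (by rw [polyH, ← hS1, hemp, sInf_empty])
    have hmem := csInf_mem hne
    rw [← polyH] at hmem
    obtain ⟨m, ⟨hm2, hmlt⟩, hmeq⟩ := hmem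
    -- show m is in the product set
    have hmd : m ≤ (f1 * f2).natDegree / 2 := by
      rw [hd]
      omega
    have hmd' : m ≤ (f1 * f2).natDegree := le_trans hmd (Nat.div_le_self _ _)
    have hstrict : (f1 * f2).coeff m < (f1 * f2).coeff ((f1 * f2).natDegree - m) := by
      rw [coeff_prod_rev f1 f2 hf1 hf2 hmd', Polynomial.coeff_mul]
      refine Finset.sum_lt_sum ?_ ⟨(m, 0), Finset.HasAntidiagonal.mem_antidiagonal.mpr (by omega), ?_⟩
      · rintro ⟨j, k⟩ hjk
        rw [Finset.HasAntidiagonal.mem_antidiagonal] at hjk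
        have hj1 : (j : ℕ∞) ≤ polyH f1 := by
          rw [← hmeq]; exact_mod_cast (by omega : j ≤ m)
        have hk2 : (k : ℕ∞) ≤ polyH f2 := le_trans (by
          rw [← hmeq]; exact_mod_cast (by omega : k ≤ m)) h12
        exact Nat.mul_le_mul (refl_coeff_le h1 hj1) (refl_coeff_le h2 hk2)
      · have hmled : m ≤ f1.natDegree := le_trans hm2 (Nat.div_le_self _ _)
        rw [Polynomial.coeff_reflect, Polynomial.coeff_reflect,
          Polynomial.revAt_le hmled, Polynomial.revAt_le (Nat.zero_le _), Nat.sub_zero]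
        have hb2 : 0 < f2.coeff f2.natDegree := by
          have := Polynomial.leadingCoeff_ne_zero.mpr hf2
          rw [Polynomial.leadingCoeff] at this
          omega
        have hb0 : f2.coeff 0 ≤ f2.coeff f2.natDegree := by
          have := h2 0 (Nat.zero_le _)
          rwa [Nat.sub_zero] at this
        calc f1.coeff m * f2.coeff 0 ≤ f1.coeff m * f2.coeff f2.natDegree :=
              Nat.mul_le_mul_left _ hb0
          _ < f1.coeff (f1.natDegree - m) * f2.coeff f2.natDegree :=
              Nat.mul_lt_mul_of_lt_of_le hmlt le_rfl hb2
    rw [← hmeq]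
    exact sInf_le ⟨m, ⟨hmd, hstrict⟩, rfl⟩

/-- If `f1, f2 ∈ ℕ[q]` are both top-heavy, then `h(f1 f2) = min (h f1) (h f2)`. -/
theorem stmt_0 (f1 f2 : Polynomial ℕ) (hf1 : f1 ≠ 0) (hf2 : f2 ≠ 0)
    (h1 : TopHeavy f1) (h2 : TopHeavy f2) :
    polyH (f1 * f2) = min (polyH f1) (polyH f2) := by
  rcases le_total (polyH f1) (polyH f2) with h | h
  · rw [min_eq_left h, aux f1 f2 hf1 hf2 h1 h2 h]
  · rw [min_eq_right h, mul_comm, aux f2 f1 hf2 hf1 h2 h1 h]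
end

section
/- Let W be a Weyl group of simply-laced type with root system Φ, let w ∈ W, and let β ∈ inv(w) be an inversion of w. If w·r_β is not covered by w in Bruhat order, then there exist positive roots β1, β2 ∈ inv(w) with β1 + β2 = β. -/
open Module

/-- A simply-laced (crystallographic, all roots of squared length 2) root system
in a real vector space `V`, equipped with a choice of positive system. -/
structure SimplyLacedRootSystem (V : Type*) [AddCommGroup V] [Module ℝ V] where
  /-- the symmetric bilinear form -/
  B : V →ₗ[ℝ] V →ₗ[ℝ] ℝ
  symm : ∀ x y : V, B x y = B y x
  /-- the set of roots -/
  Phi : Set V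
  finite : Phi.Finite
  /-- simply-laced: all roots have squared length 2 -/
  norm_two : ∀ α ∈ Phi, B α α = 2
  neg_mem : ∀ α ∈ Phi, -α ∈ Phi
  reflect_mem : ∀ α ∈ Phi, ∀ β ∈ Phi, β - B β α • α ∈ Phi
  crystallographic : ∀ α ∈ Phi, ∀ β ∈ Phi, ∃ k : ℤ, B β α = (k : ℝ)
  /-- the positive roots -/
  pos : Set V
  pos_subset : pos ⊆ Phi
  pos_iff : ∀ α ∈ Phi, (α ∈ pos ↔ -α ∉ pos)
  pos_add : ∀ α ∈ pos, ∀ β ∈ pos, α + β ∈ Phi → α + β ∈ pos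

namespace SimplyLacedRootSystem

variable {V : Type*} [AddCommGroup V] [Module ℝ V] (R : SimplyLacedRootSystem V)

/-- The reflection `r_α : y ↦ y - B(y, α) α` in the root `α`. -/
noncomputable def rfl' (α : V) (hα : α ∈ R.Phi) : V ≃ₗ[ℝ] V :=
  Module.reflection (R.norm_two α hα)

/-- The Weyl group: the group of linear automorphisms of `V` generated by the
reflections in the roots. -/
noncomputable def weylGroup : Subgroup (V ≃ₗ[ℝ] V) :=
  Subgroup.closure {g | ∃ (α : V) (hα : α ∈ R.Phi), g = R.rfl' α hα}

/-- The inversion set of `w`: positive roots sent to negative roots by `w`. -/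
def inv (w : V ≃ₗ[ℝ] V) : Set V := {α ∈ R.pos | w α ∉ R.pos}

/-- The length of `w` is the number of inversions. -/
noncomputable def len (w : V ≃ₗ[ℝ] V) : ℕ := (R.inv w).ncard

lemma rfl'_apply (α : V) (hα : α ∈ R.Phi) (y : V) :
    R.rfl' α hα y = y - R.B y α • α := by
  rw [rfl', Module.reflection_apply, R.symm]

lemma rfl'_rfl' (α : V) (hα : α ∈ R.Phi) (y : V) :
    R.rfl' α hα (R.rfl' α hα y) = y :=
  Module.involutive_reflection (R.norm_two α hα) y

lemma weyl_mem_iff {w : V ≃ₗ[ℝ] V} (hw : w ∈ R.weylGroup) :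
    ∀ x : V, x ∈ R.Phi ↔ w x ∈ R.Phi := by
  induction hw using Subgroup.closure_induction with
  | mem g hg =>
    intro x
    obtain ⟨α, hα, rfl⟩ := hg
    constructor
    · intro hx
      rw [R.rfl'_apply]
      exact R.reflect_mem α hα x hx
    · intro hx
      have := R.reflect_mem α hα _ hx
      rw [← R.rfl'_apply α hα, R.rfl'_rfl'] at this
      exact this
  | one => simp
  | mul g h hg hh ihg ihh =>
    intro x
    rw [ihh x, ihg (h x)]; rfl
  | inv g hg ih =>
    intro x
    have h1 := ih (g⁻¹ x)
    have h2 : g (g⁻¹ x) = x := g.apply_symm_apply x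
    rw [h2] at h1
    exact h1.symm

lemma weyl_maps {w : V ≃ₗ[ℝ] V} (hw : w ∈ R.weylGroup) {x : V} (hx : x ∈ R.Phi) :
    w x ∈ R.Phi := (R.weyl_mem_iff hw x).1 hx

lemma pairing_le_one {α β : V} (hα : α ∈ R.Phi) (hβ : β ∈ R.Phi) (hne : α ≠ β) :
    R.B α β ≤ 1 := by
  obtain ⟨k, hk⟩ := R.crystallographic β hβ α hα
  rw [hk]
  by_contra hgt
  push_neg at hgt
  have hk2 : (2:ℤ) ≤ k := by exact_mod_cast hgt
  -- the recursively defined sequence of roots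
  set p : ℕ → V × V := fun n => Nat.rec (β, α)
    (fun _ q => (q.2, (k:ℝ) • q.2 - q.1)) n with hp
  have hp0 : p 0 = (β, α) := rfl
  have hps : ∀ n, p (n+1) = ((p n).2, (k:ℝ) • (p n).2 - (p n).1) := fun n => rfl
  have hmem : ∀ n, (p n).1 ∈ R.Phi ∧ (p n).2 ∈ R.Phi ∧ R.B (p n).2 (p n).1 = k := by
    intro n
    induction n with
    | zero => exact ⟨hβ, hα, hk⟩
    | succ n ih =>
      obtain ⟨h1, h2, h3⟩ := ih
      rw [hps n]
      refine ⟨h2, ?_, ?_⟩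
      · have hr := R.reflect_mem _ h2 _ h1
        rw [R.symm (p n).1 (p n).2, h3] at hr
        have hneg := R.neg_mem _ hr
        rw [neg_sub] at hneg
        exact hneg
      · have h22 : R.B (p n).2 (p n).2 = 2 := R.norm_two _ h2
        have hsymm : R.B (p n).1 (p n).2 = k := by rw [R.symm (p n).1 (p n).2, h3]
        simp only [map_sub, map_smul, LinearMap.sub_apply, LinearMap.smul_apply,
          smul_eq_mul, h22, hsymm]
        ring
  rcases eq_or_lt_of_le hk2 with h2 | h3
  · -- k = 2 : translation by the isotropic vector α - β
    have hform : ∀ n, (p n).1 = β + (n:ℝ) • (α - β) ∧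
        (p n).2 = β + ((n:ℝ)+1) • (α - β) := by
      intro n
      induction n with
      | zero => rw [hp0]; constructor <;> simp
      | succ n ih =>
        obtain ⟨ih1, ih2⟩ := ih
        rw [hps n, ih1, ih2]
        have hk2' : (k:ℝ) = 2 := by exact_mod_cast h2.symm
        constructor
        · push_cast; module
        · rw [hk2']; push_cast; module
    have hinj : Function.Injective (fun n => (p n).1) := by
      intro m n hmn
      simp only [(hform m).1, (hform n).1, add_right_inj] at hmn
      have hv : (α : V) - β ≠ 0 := sub_ne_zero.mpr hne
      have := smul_left_injective ℝ hv hmn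
      exact_mod_cast this
    exact (Set.infinite_of_injective_forall_mem hinj (fun n => (hmem n).1)) R.finite
  · -- k ≥ 3 : pairing with β strictly increases
    have hk3 : (3:ℝ) ≤ (k:ℝ) := by exact_mod_cast h3
    have hmono : ∀ n, 0 < R.B (p n).1 β ∧ R.B (p n).1 β < R.B (p n).2 β := by
      intro n
      induction n with
      | zero =>
        rw [hp0]
        refine ⟨by rw [R.norm_two β hβ]; norm_num, ?_⟩
        show R.B β β < R.B α β
        rw [R.norm_two β hβ, hk]
        linarith
      | succ n ih =>
        obtain ⟨ih1, ih2⟩ := ih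
        rw [hps n]
        refine ⟨lt_trans ih1 ih2, ?_⟩
        show R.B (p n).2 β < R.B ((k:ℝ) • (p n).2 - (p n).1) β
        simp only [map_sub, map_smul, LinearMap.sub_apply, LinearMap.smul_apply,
          smul_eq_mul]
        nlinarith
    have hsm : StrictMono (fun n => R.B (p n).1 β) := by
      apply strictMono_nat_of_lt_succ
      intro n
      have := (hmono n).2
      simpa [hps n] using this
    have hinj : Function.Injective (fun n => (p n).1) :=
      Function.Injective.of_comp (f := fun v => R.B v β) hsm.injective
    exact (Set.infinite_of_injective_forall_mem hinj (fun n => (hmem n).1)) R.finite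

lemma neg_pos_of {x : V} (hx : x ∈ R.Phi) (h : x ∉ R.pos) : -x ∈ R.pos := by
  have h1 := R.pos_iff (-x) (R.neg_mem x hx)
  rw [neg_neg] at h1
  exact h1.mpr h

lemma key {β γ : V} (hβp : β ∈ R.pos) (hγp : γ ∈ R.pos) (hne : γ ≠ β)
    (hneg : γ - R.B γ β • β ∉ R.pos) : R.B γ β = 1 := by
  have hβΦ : β ∈ R.Phi := R.pos_subset hβp
  have hγΦ : γ ∈ R.Phi := R.pos_subset hγp
  obtain ⟨k, hk⟩ := R.crystallographic β hβΦ γ hγΦ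
  have hle : (k:ℝ) ≤ 1 := hk ▸ R.pairing_le_one hγΦ hβΦ hne
  have hne' : γ ≠ -β := by
    intro h
    have := (R.pos_iff β hβΦ).1 hβp
    rw [← h] at this
    exact this hγp
  have hge : -(k:ℝ) ≤ 1 := by
    have h1 := R.pairing_le_one hγΦ (R.neg_mem β hβΦ) hne'
    rwa [map_neg, hk] at h1
  have hk1 : k = 1 ∨ k = 0 ∨ k = -1 := by
    have h1 : k ≤ 1 := by exact_mod_cast hle
    have h2 : -1 ≤ k := by
      have : -(1:ℝ) ≤ (k:ℝ) := by linarith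
      exact_mod_cast this
    omega
  rcases hk1 with h | h | h
  · rw [hk, h]; norm_num
  · exfalso
    rw [hk, h] at hneg
    simp at hneg
    exact hneg hγp
  · exfalso
    have hΦ : γ - R.B γ β • β ∈ R.Phi := R.reflect_mem β hβΦ γ hγΦ
    rw [hk, h] at hΦ hneg
    push_cast at hΦ hneg
    rw [neg_smul, one_smul, sub_neg_eq_add] at hΦ hneg
    exact hneg (R.pos_add γ hγp β hβp hΦ)

end SimplyLacedRootSystem

/-- Let `W` be a simply-laced Weyl group, `w ∈ W` and `β ∈ inv(w)`.  If `w r_β` is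
not covered by `w` in Bruhat order, then there exist `β₁, β₂ ∈ inv(w)` with
`β₁ + β₂ = β`. -/
theorem stmt_1 {V : Type*} [AddCommGroup V] [Module ℝ V]
    (R : SimplyLacedRootSystem V) (w : V ≃ₗ[ℝ] V) (hw : w ∈ R.weylGroup)
    (β : V) (hβ : β ∈ R.inv w)
    (hnc : ¬ R.len w = R.len (w * R.rfl' β (R.pos_subset hβ.1)) + 1) :
    ∃ β₁ ∈ R.inv w, ∃ β₂ ∈ R.inv w, β₁ + β₂ = β := by
  classical
  by_contra hnot
  push_neg at hnot
  apply hnc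
  set rβ : V ≃ₗ[ℝ] V := R.rfl' β (R.pos_subset hβ.1) with hrβdef
  have hβp : β ∈ R.pos := hβ.1
  have hβn : w β ∉ R.pos := hβ.2
  have hβΦ : β ∈ R.Phi := R.pos_subset hβ.1
  have hra : ∀ y, rβ y = y - R.B y β • β := R.rfl'_apply β hβΦ
  have hrr : ∀ y, rβ (rβ y) = y := R.rfl'_rfl' β hβΦ
  have hwmul : ∀ y, (w * rβ) y = w (rβ y) := fun _ => rfl
  set f : V → V := fun x => if rβ x ∈ R.pos then rβ x else x with hf
  -- auxiliary: for γ positive, ≠ β, with rβ γ not positive, we get B γ β = 1 etc.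
  have haux : ∀ γ, γ ∈ R.pos → γ ≠ β → rβ γ ∉ R.pos →
      rβ γ = γ - β ∧ (γ - β) ∈ R.Phi ∧ (β - γ) ∈ R.pos := by
    intro γ hγp hγβ hc
    have h1 : R.B γ β = 1 := by
      apply R.key hβp hγp hγβ
      rw [← hra]; exact hc
    have heq : rβ γ = γ - β := by rw [hra, h1, one_smul]
    have hΦ : γ - β ∈ R.Phi := by
      have := R.reflect_mem β hβΦ γ (R.pos_subset hγp)
      rwa [h1, one_smul] at this
    have hpos : β - γ ∈ R.pos := by
      have := R.neg_pos_of hΦ (by rw [← heq]; exact hc)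
      rwa [neg_sub] at this
    exact ⟨heq, hΦ, hpos⟩
  have hbij : Set.BijOn f (R.inv w \ {β}) (R.inv (w * rβ)) := by
    refine ⟨?_, ?_, ?_⟩
    · -- MapsTo
      rintro α ⟨⟨hαp, hαn⟩, hαβ⟩
      simp only [Set.mem_singleton_iff] at hαβ
      by_cases hc : rβ α ∈ R.pos
      · have : f α = rβ α := if_pos hc
        rw [this]
        exact ⟨hc, by rw [hwmul, hrr]; exact hαn⟩
      · have hfα : f α = α := if_neg hc
        rw [hfα]
        obtain ⟨heq, hΦ, hpos⟩ := haux α hαp hαβ hc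
        refine ⟨hαp, ?_⟩
        rw [hwmul, heq]
        intro hcon
        have hwΦ : w (α - β) ∈ R.Phi := R.weyl_maps hw hΦ
        have h2 : w (β - α) ∉ R.pos := by
          have := (R.pos_iff _ hwΦ).1 hcon
          rwa [← map_neg, neg_sub] at this
        exact hnot (β - α) ⟨hpos, h2⟩ α ⟨hαp, hαn⟩ (by abel)
    · -- InjOn
      rintro a ⟨⟨hap, _⟩, _⟩ b ⟨⟨hbp, _⟩, _⟩ hab
      by_cases hca : rβ a ∈ R.pos <;> by_cases hcb : rβ b ∈ R.pos
      · rw [hf] at hab; simp only [if_pos hca, if_pos hcb] at hab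
        have := congrArg rβ hab
        rwa [hrr, hrr] at this
      · rw [hf] at hab; simp only [if_pos hca, if_neg hcb] at hab
        exfalso
        apply hcb
        rw [← hab, hrr]
        exact hap
      · rw [hf] at hab; simp only [if_neg hca, if_pos hcb] at hab
        exfalso
        apply hca
        rw [hab, hrr]
        exact hbp
      · rw [hf] at hab; simpa only [if_neg hca, if_neg hcb] using hab
    · -- SurjOn
      rintro γ ⟨hγp, hγn⟩
      rw [hwmul] at hγn
      have hγβ : γ ≠ β := by
        intro h
        apply hγn
        rw [h, hra]
        rw [R.norm_two β hβΦ]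
        have : β - (2:ℝ) • β = -β := by module
        rw [this, map_neg]
        exact R.neg_pos_of (R.weyl_maps hw hβΦ) hβn
      by_cases hc : rβ γ ∈ R.pos
      · refine ⟨rβ γ, ⟨⟨hc, hγn⟩, ?_⟩, ?_⟩
        · simp only [Set.mem_singleton_iff]
          intro h
          have : γ = rβ β := by rw [← h, hrr]
          rw [hra, R.norm_two β hβΦ] at this
          have h2 : β - (2:ℝ) • β = -β := by module
          rw [h2] at this
          rw [this] at hγp
          exact (R.pos_iff β hβΦ).1 hβp hγp
        · show f (rβ γ) = γ
          rw [hf]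
          simp only [hrr, if_pos hγp]
      · obtain ⟨heq, hΦ, hpos⟩ := haux γ hγp hγβ hc
        have hwΦ : w (γ - β) ∈ R.Phi := R.weyl_maps hw hΦ
        have h2 : w (β - γ) ∈ R.pos := by
          have := R.neg_pos_of hwΦ (by rw [← heq]; exact hγn)
          rwa [← map_neg, neg_sub] at this
        have hγinv : w γ ∉ R.pos := by
          intro hcon
          apply hβn
          have hsum : w γ + w (β - γ) = w β := by rw [← map_add]; congr 1; abel
          have := R.pos_add _ hcon _ h2 (by rw [hsum]; exact R.weyl_maps hw hβΦ)
          rwa [hsum] at this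
        refine ⟨γ, ⟨⟨hγp, hγinv⟩, hγβ⟩, ?_⟩
        show f γ = γ
        rw [hf]; simp only [if_neg hc]
  have hfin : (R.inv w).Finite := R.finite.subset (fun x hx => R.pos_subset hx.1)
  have h1 : (R.inv (w * rβ)).ncard = (R.inv w \ {β}).ncard := by
    rw [← hbij.image_eq, Set.ncard_image_of_injOn hbij.injOn]
  show R.len w = R.len (w * rβ) + 1
  unfold SimplyLacedRootSystem.len
  rw [h1, Set.ncard_diff_singleton_add_one hβ hfin]
end

section
/- For a permutation w in the symmetric group S_n that contains the pattern 3412, the minimum height of a 3412 occurrence in w equals the minimum content of a 3412 occurrence in w. -/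
open Equiv

variable {n : ℕ}

/-- An occurrence of the pattern `3412` in `w ∈ S_n`: positions `a < b < c < d`
with `w(c) < w(d) < w(a) < w(b)`. -/
def Occ3412 (w : Perm (Fin n)) (a b c d : Fin n) : Prop :=
  a < b ∧ b < c ∧ c < d ∧ w c < w d ∧ w d < w a ∧ w a < w b

/-- The height of an occurrence of `3412` at positions `a < b < c < d`:
`w(a) - w(d)`. -/
def occHeight (w : Perm (Fin n)) (a d : Fin n) : ℕ := (w a).val - (w d).val

/-- The content of an occurrence of `3412` at positions `a < b < c < d`:
`1 + |{i : b < i < c, w(d) < w(i) < w(a)}|`. -/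
noncomputable def occContent (w : Perm (Fin n)) (a b c d : Fin n) : ℕ :=
  1 + Set.ncard {i : Fin n | b < i ∧ i < c ∧ w d < w i ∧ w i < w a}

/-- `w` contains the pattern `3412`. -/
def Contains3412 (w : Perm (Fin n)) : Prop := ∃ a b c d, Occ3412 w a b c d

/-- `mh(w)`: the minimum height of a `3412` occurrence in `w`. -/
noncomputable def mh (w : Perm (Fin n)) : ℕ :=
  sInf {m | ∃ a b c d, Occ3412 w a b c d ∧ occHeight w a d = m}

/-- `mcontent(w)`: the minimum content of a `3412` occurrence in `w`. -/
noncomputable def mcontent (w : Perm (Fin n)) : ℕ :=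
  sInf {m | ∃ a b c d, Occ3412 w a b c d ∧ occContent w a b c d = m}

/-!
Every occurrence has content at most its height, since the content counts (plus one) some of
the `w a - w d - 1` values strictly between `w d` and `w a`. Conversely, if an occurrence
`(a, b, c, d)` has content smaller than its height, some value `w d < w i < w a` sits at a
position `i` outside the window `b < i < c`; then `(i, b, c, d)` (if `i < b`) or `(a, b, c, i)`
(if `c < i`) is an occurrence of smaller height whose content is no larger. Iterating, the content
of every occurrence is at least the height of some occurrence.
-/

lemma ncard_preimage_Ioo (w : Perm (Fin n)) (x y : Fin n) :
    (w ⁻¹' Set.Ioo x y).ncard = y.val - x.val - 1 := by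
  rw [← w.image_symm_eq_preimage, Set.ncard_image_of_injective _ w.symm.injective,
    ← Finset.coe_Ioo, Set.ncard_coe_finset, Fin.card_Ioo]

lemma occContent_le_occHeight (w : Perm (Fin n)) {a b c d : Fin n} (h : Occ3412 w a b c d) :
    occContent w a b c d ≤ occHeight w a d := by
  have hsub : {i : Fin n | b < i ∧ i < c ∧ w d < w i ∧ w i < w a} ⊆ w ⁻¹' Set.Ioo (w d) (w a) :=
    fun i hi => ⟨hi.2.2.1, hi.2.2.2⟩
  have hle := Set.ncard_le_ncard hsub (Set.toFinite _)
  have hda : (w d).val < (w a).val := h.2.2.2.2.1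
  rw [ncard_preimage_Ioo] at hle
  unfold occContent occHeight
  omega

lemma occContent_mono (w : Perm (Fin n)) (b c : Fin n) {a a' d d' : Fin n}
    (ha : w a' ≤ w a) (hd : w d ≤ w d') :
    occContent w a' b c d' ≤ occContent w a b c d := by
  refine Nat.add_le_add_left (Set.ncard_le_ncard ?_ (Set.toFinite _)) 1
  exact fun i ⟨hbi, hic, hdi, hia⟩ => ⟨hbi, hic, hd.trans_lt hdi, hia.trans_le ha⟩

lemma exists_value_between_outside (w : Perm (Fin n)) {a b c d : Fin n}
    (h : occContent w a b c d < occHeight w a d) :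
    ∃ i, w d < w i ∧ w i < w a ∧ ¬ (b < i ∧ i < c) := by
  by_contra! hall
  have hsub : w ⁻¹' Set.Ioo (w d) (w a) ⊆ {i : Fin n | b < i ∧ i < c ∧ w d < w i ∧ w i < w a} :=
    fun i ⟨hdi, hia⟩ => ⟨(hall i hdi hia).1, (hall i hdi hia).2, hdi, hia⟩
  have hle := Set.ncard_le_ncard hsub (Set.toFinite _)
  rw [ncard_preimage_Ioo] at hle
  unfold occContent occHeight at h
  omega

lemma exists_occ3412_lower_height (w : Perm (Fin n)) {a b c d : Fin n} (h : Occ3412 w a b c d)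
    (hlt : occContent w a b c d < occHeight w a d) :
    ∃ a' d', Occ3412 w a' b c d' ∧ occHeight w a' d' < occHeight w a d ∧
      occContent w a' b c d' ≤ occContent w a b c d := by
  obtain ⟨hab, hbc, hcd, hcd', -, hab'⟩ := h
  obtain ⟨i, hdi, hia, hout⟩ := exists_value_between_outside w hlt
  have hdi' : (w d).val < (w i).val := hdi
  have hia' : (w i).val < (w a).val := hia
  have hib : i ≠ b := by rintro rfl; exact lt_asymm hia hab'
  have hic : i ≠ c := by rintro rfl; exact lt_asymm hdi hcd'
  rcases lt_or_gt_of_ne hib with hi | hi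
  · refine ⟨i, d, ⟨hi, hbc, hcd, hcd', hdi, hia.trans hab'⟩, ?_,
      occContent_mono w b c hia.le le_rfl⟩
    unfold occHeight; omega
  · have hci : c < i := lt_of_le_of_ne (not_lt.mp fun h => hout ⟨hi, h⟩) hic.symm
    refine ⟨a, i, ⟨hab, hbc, hci, hcd'.trans hdi, hia, hab'⟩, ?_,
      occContent_mono w b c le_rfl hdi.le⟩
    unfold occHeight; omega

lemma exists_occ3412_occHeight_le_occContent (w : Perm (Fin n)) {a b c d : Fin n}
    (h : Occ3412 w a b c d) :
    ∃ p q r s, Occ3412 w p q r s ∧ occHeight w p s ≤ occContent w a b c d := by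
  induction hm : occHeight w a d using Nat.strong_induction_on generalizing a d with
  | _ m ih =>
    by_cases hle : occHeight w a d ≤ occContent w a b c d
    · exact ⟨a, b, c, d, h, hle⟩
    obtain ⟨a', d', h', hheight, hcontent⟩ := exists_occ3412_lower_height w h (not_le.mp hle)
    obtain ⟨p, q, r, s, ho, hps⟩ := ih _ (hm ▸ hheight) h' rfl
    exact ⟨p, q, r, s, ho, hps.trans hcontent⟩

lemma mh_le (w : Perm (Fin n)) {a b c d : Fin n} (h : Occ3412 w a b c d) :
    mh w ≤ occHeight w a d :=
  Nat.sInf_le ⟨a, b, c, d, h, rfl⟩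

lemma mcontent_le (w : Perm (Fin n)) {a b c d : Fin n} (h : Occ3412 w a b c d) :
    mcontent w ≤ occContent w a b c d :=
  Nat.sInf_le ⟨a, b, c, d, h, rfl⟩

lemma exists_occHeight_eq_mh (w : Perm (Fin n)) (hw : Contains3412 w) :
    ∃ a b c d, Occ3412 w a b c d ∧ occHeight w a d = mh w := by
  obtain ⟨a, b, c, d, h⟩ := hw
  exact Nat.sInf_mem (s := {m | ∃ a b c d, Occ3412 w a b c d ∧ occHeight w a d = m})
    ⟨_, a, b, c, d, h, rfl⟩

lemma exists_occContent_eq_mcontent (w : Perm (Fin n)) (hw : Contains3412 w) :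
    ∃ a b c d, Occ3412 w a b c d ∧ occContent w a b c d = mcontent w := by
  obtain ⟨a, b, c, d, h⟩ := hw
  exact Nat.sInf_mem (s := {m | ∃ a b c d, Occ3412 w a b c d ∧ occContent w a b c d = m})
    ⟨_, a, b, c, d, h, rfl⟩

/-- For `w ∈ S_n` containing the pattern `3412`, the minimum height of a `3412`
occurrence equals the minimum content of a `3412` occurrence. -/
theorem stmt_3 (w : Perm (Fin n)) (hw : Contains3412 w) : mh w = mcontent w := by
  apply le_antisymm
  · obtain ⟨a, b, c, d, h, hcontent⟩ := exists_occContent_eq_mcontent w hw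
    obtain ⟨p, q, r, s, ho, hle⟩ := exists_occ3412_occHeight_le_occContent w h
    calc mh w ≤ occHeight w p s := mh_le w ho
      _ ≤ occContent w a b c d := hle
      _ = mcontent w := hcontent
  · obtain ⟨a, b, c, d, h, hheight⟩ := exists_occHeight_eq_mh w hw
    calc mcontent w ≤ occContent w a b c d := mcontent_le w h
      _ ≤ occHeight w a d := occContent_le_occHeight w h
      _ = mh w := hheight
end

section
/- For a permutation w in S_n containing the pattern 3412, the minimum content of a 3412 occurrence in w equals the minimum content of a 3412 occurrence in w⁻¹. -/
open Equiv

variable {n : ℕ}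

lemma occ_inv (w : Perm (Fin n)) {a b c d : Fin n} (h : Occ3412 w a b c d) :
    Occ3412 w⁻¹ (w c) (w d) (w a) (w b) ∧
      occContent w⁻¹ (w c) (w d) (w a) (w b) = occContent w a b c d := by
  obtain ⟨h1, h2, h3, h4, h5, h6⟩ := h
  constructor
  · refine ⟨h4, h5, h6, ?_, ?_, ?_⟩ <;> simp [h1, h2, h3, lt_trans h1 h2, lt_trans h2 h3]
  · unfold occContent
    congr 1
    have hset : {i : Fin n | w d < i ∧ i < w a ∧ w⁻¹ (w b) < w⁻¹ i ∧ w⁻¹ i < w⁻¹ (w c)}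
        = w '' {j : Fin n | b < j ∧ j < c ∧ w d < w j ∧ w j < w a} := by
      ext i
      simp only [Set.mem_setOf_eq, Set.mem_image, Perm.coe_inv, Equiv.symm_apply_apply]
      constructor
      · rintro ⟨p1, p2, p3, p4⟩
        exact ⟨w⁻¹ i, ⟨p3, p4, by simpa using p1, by simpa using p2⟩, by simp⟩
      · rintro ⟨j, ⟨q1, q2, q3, q4⟩, rfl⟩
        simpa using ⟨q3, q4, q1, q2⟩
    rw [hset, Set.ncard_image_of_injective _ w.injective]

lemma mset_subset (w : Perm (Fin n)) :
    {m | ∃ a b c d, Occ3412 w a b c d ∧ occContent w a b c d = m} ⊆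
      {m | ∃ a b c d, Occ3412 w⁻¹ a b c d ∧ occContent w⁻¹ a b c d = m} := by
  rintro m ⟨a, b, c, d, ho, rfl⟩
  obtain ⟨h1, h2⟩ := occ_inv w ho
  exact ⟨w c, w d, w a, w b, h1, h2⟩

/-- For `w ∈ S_n` containing the pattern `3412`, the minimum content of a `3412`
occurrence in `w` equals the minimum content of a `3412` occurrence in `w⁻¹`. -/
theorem stmt_4 (w : Perm (Fin n)) (hw : Contains3412 w) : mcontent w = mcontent w⁻¹ := by
  unfold mcontent
  congr 1
  apply Set.Subset.antisymm (mset_subset w)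
  have := mset_subset w⁻¹
  simpa using this
end

section
/- For u ∈ S_n lying in W^J with J = {2, ..., n−1}, where W^J means minimal coset representatives so that u(2) < u(3) < ··· < u(n−1), the Coxeter length of u equals (u(1) − 1) + (n − u(n)) − [u(1) > u(n)], where [u(1) > u(n)] is 1 if u(1) > u(n) and 0 otherwise. -/
open Equiv

/-- The Coxeter length of a permutation: its number of inversions. -/
def permLen {n : ℕ} (w : Perm (Fin n)) : ℕ :=
  (Finset.univ.filter fun p : Fin n × Fin n => p.1 < p.2 ∧ w p.2 < w p.1).card

/-- Let `u ∈ S_n` lie in `W^J` for `J = {2, …, n-2}`, i.e. (1-indexed)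
`u(2) < u(3) < ⋯ < u(n-1)`.  Then
`ℓ(u) = (u(1) - 1) + (n - u(n)) - [u(1) > u(n)]`, stated here (0-indexed, and
with the indicator moved to the left-hand side to avoid truncated subtraction) as
`ℓ(u) + [u(1) > u(n)] = (u(1) - 1) + (n - u(n))`. -/
theorem stmt_6 (n : ℕ) (hn : 1 ≤ n) (u : Perm (Fin n))
    (hu : ∀ i j : Fin n, 1 ≤ i.val → i < j → j.val ≤ n - 2 → u i < u j) :
    permLen u + (if u ⟨n - 1, by omega⟩ < u ⟨0, by omega⟩ then 1 else 0) =
      (u ⟨0, by omega⟩).val + (n - 1 - (u ⟨n - 1, by omega⟩).val) := by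
  classical
  set z : Fin n := ⟨0, by omega⟩ with hz
  set m : Fin n := ⟨n - 1, by omega⟩ with hm
  set a := u z with ha
  set b := u m with hb
  set S := (Finset.univ.filter fun p : Fin n × Fin n => p.1 < p.2 ∧ u p.2 < u p.1) with hS
  set A := S.filter (fun p => p.1 = z) with hA
  set B := S.filter (fun p => p.2 = m) with hB
  have hsplit : S = A ∪ B := by
    ext p
    simp only [hA, hB, Finset.mem_union, Finset.mem_filter, hS, Finset.mem_univ, true_and]
    constructor
    · rintro ⟨hlt, hinv⟩
      by_contra hcon
      push_neg at hcon
      obtain ⟨h1, h2⟩ := hcon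
      have h1' : 1 ≤ p.1.val := by
        rcases Nat.eq_zero_or_pos p.1.val with h | h
        · exact absurd (Fin.ext h : p.1 = z) (fun hh => (h1 ⟨hlt, hinv⟩) hh)
        · exact h
      have h2' : p.2.val ≤ n - 2 := by
        have hne : p.2 ≠ m := fun hh => (h2 ⟨hlt, hinv⟩) hh
        have : p.2.val ≠ n - 1 := fun hh => hne (Fin.ext hh)
        have := p.2.isLt; omega
      exact absurd (hu p.1 p.2 h1' hlt h2') (not_lt.mpr (le_of_lt hinv))
    · rintro (⟨h, _⟩ | ⟨h, _⟩) <;> exact h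
  have cardA : A.card = a.val := by
    have himg : A = (Finset.univ.filter fun j : Fin n => u j < a).image (fun j => (z, j)) := by
      ext p
      simp only [hA, hS, Finset.mem_filter, Finset.mem_univ, true_and, Finset.mem_image]
      constructor
      · rintro ⟨⟨hlt, hinv⟩, h1⟩
        exact ⟨p.2, by rw [h1] at hinv; exact hinv, by rw [← h1]⟩
      · rintro ⟨j, hj, rfl⟩
        have hjz : j ≠ z := fun hh => absurd hj (by rw [hh]; exact lt_irrefl a)
        have : z < j := by
          have : j.val ≠ 0 := fun hh => hjz (Fin.ext hh)
          exact Fin.lt_def.mpr (by simp [hz]; omega)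
        exact ⟨⟨this, hj⟩, rfl⟩
    rw [himg, Finset.card_image_of_injective _ (fun x y h => (Prod.mk.injEq _ _ _ _ ▸ h).2)]
    have : (Finset.univ.filter fun j : Fin n => u j < a).card
        = (Finset.univ.filter fun v : Fin n => v < a).card := by
      apply Finset.card_bij (fun j _ => u j)
      · intro j hj; simp only [Finset.mem_filter, Finset.mem_univ, true_and] at hj ⊢; exact hj
      · intro x _ y _ h; exact u.injective h
      · intro v hv
        simp only [Finset.mem_filter, Finset.mem_univ, true_and] at hv
        exact ⟨u.symm v, by simp [hv], by simp⟩
    rw [this]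
    have : (Finset.univ.filter fun v : Fin n => v < a) = Finset.Iio a := by
      ext v; simp [Finset.mem_Iio]
    rw [this, Fin.card_Iio]
  have cardB : B.card = n - 1 - b.val := by
    have himg : B = (Finset.univ.filter fun i : Fin n => b < u i).image (fun i => (i, m)) := by
      ext p
      simp only [hB, hS, Finset.mem_filter, Finset.mem_univ, true_and, Finset.mem_image]
      constructor
      · rintro ⟨⟨hlt, hinv⟩, h2⟩
        exact ⟨p.1, by rw [h2] at hinv; exact hinv, by rw [← h2]⟩
      · rintro ⟨i, hi, rfl⟩
        have him : i ≠ m := fun hh => absurd hi (by rw [hh]; exact lt_irrefl b)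
        have : i < m := by
          have : i.val ≠ n - 1 := fun hh => him (Fin.ext hh)
          have := i.isLt
          exact Fin.lt_def.mpr (by simp [hm]; omega)
        exact ⟨⟨this, hi⟩, rfl⟩
    rw [himg, Finset.card_image_of_injective _ (fun x y h => (Prod.mk.injEq _ _ _ _ ▸ h).1)]
    have : (Finset.univ.filter fun i : Fin n => b < u i).card
        = (Finset.univ.filter fun v : Fin n => b < v).card := by
      apply Finset.card_bij (fun i _ => u i)
      · intro i hi; simp only [Finset.mem_filter, Finset.mem_univ, true_and] at hi ⊢; exact hi
      · intro x _ y _ h; exact u.injective h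
      · intro v hv
        simp only [Finset.mem_filter, Finset.mem_univ, true_and] at hv
        exact ⟨u.symm v, by simp [hv], by simp⟩
    rw [this]
    have : (Finset.univ.filter fun v : Fin n => b < v) = Finset.Ioi b := by
      ext v; simp [Finset.mem_Ioi]
    rw [this, Fin.card_Ioi]
  have cardI : (A ∩ B).card = if b < a then 1 else 0 := by
    have hAB : A ∩ B = S.filter (fun p => p.1 = z ∧ p.2 = m) := by
      rw [hA, hB, ← Finset.filter_and]
    rw [hAB]
    split_ifs with hba
    · have hnm : z < m := by
        have hne : a ≠ b := ne_of_gt hba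
        have : z ≠ m := fun hh => hne (by rw [ha, hb, hh])
        have : (0:ℕ) ≠ n - 1 := fun hh => this (Fin.ext hh)
        exact Fin.lt_def.mpr (by simp [hz, hm]; omega)
      have : S.filter (fun p => p.1 = z ∧ p.2 = m) = {(z, m)} := by
        ext p
        simp only [hS, Finset.mem_filter, Finset.mem_univ, true_and, Finset.mem_singleton]
        constructor
        · rintro ⟨_, h1, h2⟩; exact Prod.ext h1 h2
        · rintro rfl; exact ⟨⟨hnm, hba⟩, rfl, rfl⟩
      rw [this, Finset.card_singleton]
    · have : S.filter (fun p => p.1 = z ∧ p.2 = m) = ∅ := by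
        ext p
        simp only [hS, Finset.mem_filter, Finset.mem_univ, true_and, Finset.notMem_empty,
          iff_false]
        rintro ⟨⟨_, hinv⟩, h1, h2⟩
        exact hba (by rw [h1, h2] at hinv; exact hinv)
      rw [this, Finset.card_empty]
  have key := Finset.card_union_add_card_inter A B
  rw [← hsplit, cardA, cardB, cardI] at key
  have : permLen u = S.card := rfl
  rw [this]
  omega
end

section
/- Two finite sets X, Y ⊆ {1,...,n} with |X| = |Y| = k satisfy X ≤ Y in Gale order (x_i ≤ y_i for all i after sorting both increasingly) as needed in the tableau criterion: for u, v ∈ S_n, u ≤ v in Bruhat order if and only if for every k = 1, ..., n, the set {u(1),...,u(k)} is ≤ {v(1),...,v(k)} in Gale order. -/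
open Equiv

/-- Bruhat order on `S_n`. -/
def BruhatLE {n : ℕ} (u v : Perm (Fin n)) : Prop :=
  Relation.ReflTransGen
    (fun x y => permLen x < permLen y ∧ ∃ i j : Fin n, y = x * Equiv.swap i j) u v

/-- Gale order on subsets of `{1, …, n}` of equal size: after sorting both sets
increasingly, corresponding entries satisfy `x_i ≤ y_i`. -/
def galeLE {n : ℕ} (X Y : Finset (Fin n)) : Prop :=
  List.Forall₂ (· ≤ ·) (X.sort (· ≤ ·)) (Y.sort (· ≤ ·))

/-- The set `{u(1), …, u(k)}` of the first `k` values of `u` (positions 0-indexed). -/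
def firstVals {n : ℕ} (u : Perm (Fin n)) (k : ℕ) : Finset (Fin n) :=
  (Finset.univ.filter fun i : Fin n => i.val < k).image u

namespace Stmt9
open Finset
variable {n : ℕ}

/-- number of positions `m < k` with value `≥ t`. -/
def cnt (w : Perm (Fin n)) (k t : ℕ) : ℕ :=
  (Finset.univ.filter fun m : Fin n => m.val < k ∧ t ≤ (w m).val).card

/-- number of positions `m < k` with value in `[t₁, t₂)`. -/
def cntIn (w : Perm (Fin n)) (k t₁ t₂ : ℕ) : ℕ :=
  (Finset.univ.filter fun m : Fin n => m.val < k ∧ t₁ ≤ (w m).val ∧ (w m).val < t₂).card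

theorem cnt_congr {w₁ w₂ : Perm (Fin n)} {k : ℕ} (h : ∀ m : Fin n, m.val < k → w₁ m = w₂ m)
    (t : ℕ) : cnt w₁ k t = cnt w₂ k t := by
  unfold cnt; congr 1; apply Finset.filter_congr; intro m _
  by_cases hm : m.val < k
  · simp [hm, h m hm]
  · simp [hm]

theorem cntIn_congr {w₁ w₂ : Perm (Fin n)} {k : ℕ} (h : ∀ m : Fin n, m.val < k → w₁ m = w₂ m)
    (t₁ t₂ : ℕ) : cntIn w₁ k t₁ t₂ = cntIn w₂ k t₁ t₂ := by
  unfold cntIn; congr 1; apply Finset.filter_congr; intro m _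
  by_cases hm : m.val < k
  · simp [hm, h m hm]
  · simp [hm]

theorem cnt_split (w : Perm (Fin n)) (k : ℕ) {t₁ t₂ : ℕ} (h : t₁ ≤ t₂) :
    cnt w k t₁ = cnt w k t₂ + cntIn w k t₁ t₂ := by
  unfold cnt cntIn
  rw [← Finset.card_union_of_disjoint]
  · congr 1; ext m; simp only [Finset.mem_filter, Finset.mem_union, Finset.mem_univ, true_and]
    constructor
    · rintro ⟨h1, h2⟩; by_cases hc : t₂ ≤ (w m).val
      · exact Or.inl ⟨h1, hc⟩
      · exact Or.inr ⟨h1, h2, by omega⟩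
    · rintro (⟨h1, h2⟩ | ⟨h1, h2, h3⟩) <;> exact ⟨h1, by omega⟩
  · rw [Finset.disjoint_filter]; rintro m _ ⟨_, h2⟩ ⟨_, _, h3⟩; omega

theorem cnt_zero (w : Perm (Fin n)) (t : ℕ) : cnt w 0 t = 0 := by
  unfold cnt
  rw [Finset.card_eq_zero, Finset.filter_eq_empty_iff]
  intro m _; simp

theorem cnt_ge {w : Perm (Fin n)} {k : ℕ} (h : n ≤ k) (t : ℕ) : cnt w k t = cnt w n t := by
  unfold cnt; congr 1; apply Finset.filter_congr; intro m _
  have := m.isLt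
  constructor
  · rintro ⟨_, h2⟩; exact ⟨this, h2⟩
  · rintro ⟨_, h2⟩; exact ⟨by omega, h2⟩

theorem cnt_succ (w : Perm (Fin n)) (i : Fin n) (t : ℕ) :
    cnt w (i.val + 1) t = cnt w i.val t + (if t ≤ (w i).val then 1 else 0) := by
  unfold cnt
  by_cases ht : t ≤ (w i).val
  · rw [if_pos ht]
    have hins : (Finset.univ.filter fun m : Fin n => m.val < i.val + 1 ∧ t ≤ (w m).val) =
        insert i (Finset.univ.filter fun m : Fin n => m.val < i.val ∧ t ≤ (w m).val) := by
      ext m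
      simp only [Finset.mem_filter, Finset.mem_insert, Finset.mem_univ, true_and]
      constructor
      · rintro ⟨h1, h2⟩
        by_cases hm : m = i
        · exact Or.inl hm
        · refine Or.inr ⟨?_, h2⟩
          have : m.val ≠ i.val := fun h => hm (Fin.ext h)
          omega
      · rintro (rfl | ⟨h1, h2⟩)
        · exact ⟨by omega, ht⟩
        · exact ⟨by omega, h2⟩
    rw [hins, Finset.card_insert_of_notMem (by simp)]
  · rw [if_neg ht]
    have hset : (Finset.univ.filter fun m : Fin n => m.val < i.val + 1 ∧ t ≤ (w m).val) =
        (Finset.univ.filter fun m : Fin n => m.val < i.val ∧ t ≤ (w m).val) := by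
      apply Finset.filter_congr; intro m _
      constructor
      · rintro ⟨h1, h2⟩
        refine ⟨?_, h2⟩
        have hne : m ≠ i := fun h => ht (h ▸ h2)
        have : m.val ≠ i.val := fun h => hne (Fin.ext h)
        omega
      · rintro ⟨h1, h2⟩; exact ⟨by omega, h2⟩
    rw [hset, Nat.add_zero]

section ListLemmas

theorem forall2_to_countP {l₁ l₂ : List (Fin n)} (h : List.Forall₂ (· ≤ ·) l₁ l₂) (t : ℕ) :
    l₁.countP (fun x => decide (t ≤ x.val)) ≤ l₂.countP (fun x => decide (t ≤ x.val)) := by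
  induction h with
  | nil => exact le_refl _
  | @cons a b l₁' l₂' hab htl ih =>
      rw [List.countP_cons, List.countP_cons]
      have hd : (if decide (t ≤ a.val) = true then 1 else 0) ≤
          (if decide (t ≤ b.val) = true then 1 else 0) := by
        have hv : a.val ≤ b.val := hab
        by_cases h1 : t ≤ a.val
        · have h2 : t ≤ b.val := le_trans h1 hv
          simp [h1, h2]
        · simp [h1]
      exact Nat.add_le_add ih hd

theorem countP_to_forall2 : ∀ (l₁ l₂ : List (Fin n)), l₁.Pairwise (· ≤ ·) → l₂.Pairwise (· ≤ ·) →
    l₁.length = l₂.length →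
    (∀ t : ℕ, l₁.countP (fun x => decide (t ≤ x.val)) ≤ l₂.countP (fun x => decide (t ≤ x.val))) →
    List.Forall₂ (· ≤ ·) l₁ l₂ := by
  intro l₁
  induction l₁ with
  | nil =>
      intro l₂ _ _ hlen _
      cases l₂ with
      | nil => exact List.Forall₂.nil
      | cons b l₂' => simp at hlen
  | cons a l₁' ih =>
      intro l₂ s₁ s₂ hlen hcnt
      cases l₂ with
      | nil => simp at hlen
      | cons b l₂' =>
          have hall₂ : ∀ x ∈ b :: l₂', a.val ≤ x.val := by
            have h1 : (a :: l₁').countP (fun x => decide (a.val ≤ x.val)) =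
                (a :: l₁').length := by
              rw [List.countP_eq_length]
              intro x hx
              simp only [decide_eq_true_eq]
              rcases List.mem_cons.1 hx with rfl | hx
              · exact le_refl _
              · exact (List.pairwise_cons.1 s₁).1 x hx
            have h2 := hcnt a.val
            rw [h1] at h2
            have h3 : (b :: l₂').countP (fun x => decide (a.val ≤ x.val)) =
                (b :: l₂').length := by
              have h4 := List.countP_le_length
                (l := b :: l₂') (p := fun x : Fin n => decide (a.val ≤ x.val))
              omega
            intro x hx
            have := List.countP_eq_length.1 h3 x hx
            simpa using this
          have hab : a ≤ b := by
            have := hall₂ b (List.mem_cons_self (a := b) (l := l₂'))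
            exact Fin.mk_le_of_le_val this
          refine List.Forall₂.cons hab ?_
          apply ih l₂' (List.pairwise_cons.1 s₁).2 (List.pairwise_cons.1 s₂).2 (by simpa using hlen)
          intro t
          by_cases hb : t ≤ b.val
          · have : l₂'.countP (fun x => decide (t ≤ x.val)) = l₂'.length := by
              rw [List.countP_eq_length]
              intro x hx
              simp only [decide_eq_true_eq]
              exact le_trans hb ((List.pairwise_cons.1 s₂).1 x hx)
            rw [this]
            have := List.countP_le_length (l := l₁') (p := fun x : Fin n => decide (t ≤ x.val))
            have hlen' : l₁'.length = l₂'.length := by simpa using hlen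
            omega
          · have h2 := hcnt t
            rw [List.countP_cons, List.countP_cons] at h2
            have hbite : (if decide (t ≤ b.val) = true then 1 else 0) = 0 := by
              simp [hb]
            rw [hbite] at h2
            omega

end ListLemmas

theorem sort_countP (X : Finset (Fin n)) (t : ℕ) :
    (X.sort (· ≤ ·)).countP (fun x => decide (t ≤ x.val)) =
      (X.filter fun x => t ≤ x.val).card := by
  have h1 : (X.filter fun x => t ≤ x.val).card =
      Multiset.countP (fun x : Fin n => t ≤ x.val) X.val := by
    rw [Multiset.countP_eq_card_filter]; rfl
  rw [h1, ← Finset.sort_eq X (· ≤ ·), Multiset.coe_countP]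

theorem firstVals_filter_card (w : Perm (Fin n)) (k t : ℕ) :
    ((firstVals w k).filter fun x => t ≤ x.val).card = cnt w k t := by
  unfold firstVals cnt
  rw [Finset.filter_image, Finset.card_image_of_injective _ w.injective, Finset.filter_filter]

theorem card_firstVals (w : Perm (Fin n)) (k : ℕ) :
    (firstVals w k).card = (Finset.univ.filter fun i : Fin n => i.val < k).card := by
  unfold firstVals
  exact Finset.card_image_of_injective _ w.injective

theorem gale_iff_cnt (u v : Perm (Fin n)) (k : ℕ) :
    galeLE (firstVals u k) (firstVals v k) ↔ ∀ t : ℕ, cnt u k t ≤ cnt v k t := by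
  constructor
  · intro h t
    have := forall2_to_countP h t
    rwa [sort_countP, sort_countP, firstVals_filter_card, firstVals_filter_card] at this
  · intro h
    apply countP_to_forall2 _ _ (Finset.pairwise_sort _ _) (Finset.pairwise_sort _ _)
    · rw [Finset.length_sort, Finset.length_sort, card_firstVals, card_firstVals]
    · intro t
      rw [sort_countP, sort_countP, firstVals_filter_card, firstVals_filter_card]
      exact h t

section LengthLemma

theorem swap_case {w : Perm (Fin n)} {i j a b : Fin n} (hij : i < j) (hw : w i < w j)
    (h1 : a < b) (h2 : w b < w a) (hc : ¬ Equiv.swap i j a < Equiv.swap i j b) :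
    w (Equiv.swap i j b) < w (Equiv.swap i j a) := by
  rcases eq_or_ne a i with hai | hai
  · rcases eq_or_ne b j with hbj | hbj
    · exfalso; rw [hai, hbj] at h2; exact absurd hw (not_lt.2 h2.le)
    · have hbi : b ≠ i := by rw [← hai]; exact h1.ne'
      rw [hai, Equiv.swap_apply_left, Equiv.swap_apply_of_ne_of_ne hbi hbj]
      rw [hai] at h2; exact h2.trans hw
  · rcases eq_or_ne a j with haj | haj
    · exfalso
      have hbj : b ≠ j := by rw [← haj]; exact h1.ne'
      have hbi : b ≠ i := by
        intro h; rw [haj, h] at h1; exact absurd (hij.trans h1) (lt_irrefl _)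
      rw [haj, Equiv.swap_apply_right, Equiv.swap_apply_of_ne_of_ne hbi hbj] at hc
      rw [haj] at h1
      exact hc (hij.trans h1)
    · rcases eq_or_ne b i with hbi | hbi
      · exfalso
        rw [Equiv.swap_apply_of_ne_of_ne hai haj, hbi, Equiv.swap_apply_left] at hc
        rw [hbi] at h1
        exact hc (h1.trans hij)
      · rcases eq_or_ne b j with hbj | hbj
        · rw [Equiv.swap_apply_of_ne_of_ne hai haj, hbj, Equiv.swap_apply_right]
          rw [hbj] at h2
          exact hw.trans h2
        · exfalso
          rw [Equiv.swap_apply_of_ne_of_ne hai haj,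
            Equiv.swap_apply_of_ne_of_ne hbi hbj] at hc
          exact hc h1

theorem permLen_lt_swap {w : Perm (Fin n)} {i j : Fin n} (hij : i < j) (hw : w i < w j) :
    permLen w < permLen (w * Equiv.swap i j) := by
  set y := w * Equiv.swap i j with hy
  have hyv : ∀ m, y m = w (Equiv.swap i j m) := fun m => rfl
  have hswap : ∀ m, Equiv.swap i j (Equiv.swap i j m) = m := fun m => Equiv.swap_apply_self i j m
  set I : Perm (Fin n) → Finset (Fin n × Fin n) := fun z =>
    Finset.univ.filter fun p : Fin n × Fin n => p.1 < p.2 ∧ z p.2 < z p.1 with hI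
  have hijI : (i, j) ∈ I y := by
    simp only [hI, Finset.mem_filter, Finset.mem_univ, true_and]
    refine ⟨hij, ?_⟩
    simp [hyv, Equiv.swap_apply_left, Equiv.swap_apply_right, hw]
  have key : (I w).card ≤ ((I y).erase (i, j)).card := by
    apply Finset.card_le_card_of_injOn
      (fun p => if Equiv.swap i j p.1 < Equiv.swap i j p.2
        then (Equiv.swap i j p.1, Equiv.swap i j p.2) else p)
    · rintro ⟨a, b⟩ hab
      simp only [hI, Finset.mem_coe, Finset.mem_filter, Finset.mem_univ, true_and] at hab
      obtain ⟨h1, h2⟩ := hab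
      by_cases hc : Equiv.swap i j a < Equiv.swap i j b
      · simp only [hc, if_true]
        rw [Finset.mem_coe, Finset.mem_erase]
        constructor
        · intro hcon
          rw [Prod.mk.injEq] at hcon
          obtain ⟨e1, e2⟩ := hcon
          have ea : a = j := by rw [← hswap a, e1, Equiv.swap_apply_left]
          have eb : b = i := by rw [← hswap b, e2, Equiv.swap_apply_right]
          rw [ea, eb] at h1
          exact absurd (hij.trans h1) (lt_irrefl i)
        · simp only [hI, Finset.mem_filter, Finset.mem_univ, true_and]
          exact ⟨hc, by simpa [hyv, hswap] using h2⟩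
      · simp only [hc, if_false]
        rw [Finset.mem_coe, Finset.mem_erase]
        constructor
        · intro hcon
          rw [Prod.mk.injEq] at hcon
          obtain ⟨rfl, rfl⟩ := hcon
          exact absurd hw (not_lt.2 (le_of_lt h2))
        · simp only [hI, Finset.mem_filter, Finset.mem_univ, true_and]
          exact ⟨h1, by simpa [hyv] using swap_case hij hw h1 h2 hc⟩
    · rintro ⟨a, b⟩ ha ⟨c, d⟩ hcd heq
      simp only [hI, Finset.coe_filter, Set.mem_setOf_eq, Finset.mem_univ, true_and] at ha hcd
      by_cases h1 : Equiv.swap i j a < Equiv.swap i j b <;>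
        by_cases h2 : Equiv.swap i j c < Equiv.swap i j d <;>
          simp only [h1, h2, if_true, if_false, Prod.mk.injEq] at heq
      · simp only [Prod.mk.injEq]
        exact ⟨Equiv.injective _ heq.1, Equiv.injective _ heq.2⟩
      · exfalso; rw [← heq.1, ← heq.2, hswap, hswap] at h2; exact h2 ha.1
      · exfalso; rw [heq.1, heq.2, hswap, hswap] at h1; exact h1 hcd.1
      · simp only [Prod.mk.injEq]; exact heq
  calc (I w).card ≤ ((I y).erase (i, j)).card := key
    _ < (I y).card := Finset.card_erase_lt_of_mem hijI

end LengthLemma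

section EasyDirection

theorem cnt_mul_swap_high {w : Perm (Fin n)} {i j : Fin n} {k : ℕ}
    (hi : i.val < k) (hj : j.val < k) (t : ℕ) :
    cnt (w * Equiv.swap i j) k t = cnt w k t := by
  unfold cnt
  have hlt : ∀ m : Fin n, m.val < k → ((Equiv.swap i j) m).val < k := by
    intro m hm
    rw [Equiv.swap_apply_def]
    split_ifs with h1 h2
    · exact hj
    · exact hi
    · exact hm
  have himg : (Finset.univ.filter fun m : Fin n => m.val < k ∧ t ≤ ((w * Equiv.swap i j) m).val)
      = (Finset.univ.filter fun m : Fin n => m.val < k ∧ t ≤ (w m).val).image (Equiv.swap i j) := by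
    ext m
    simp only [Finset.mem_filter, Finset.mem_image, Finset.mem_univ, true_and]
    constructor
    · rintro ⟨h1, h2⟩
      exact ⟨Equiv.swap i j m, ⟨hlt m h1, h2⟩, Equiv.swap_apply_self i j m⟩
    · rintro ⟨x, ⟨hx1, hx2⟩, rfl⟩
      refine ⟨hlt x hx1, ?_⟩
      have : (w * Equiv.swap i j) (Equiv.swap i j x) = w x := by
        simp [Equiv.Perm.mul_apply, Equiv.swap_apply_self]
      rwa [this]
  rw [himg, Finset.card_image_of_injective _ (Equiv.injective _)]

theorem cnt_le_mul_swap {x : Perm (Fin n)} {i j : Fin n} (hij : i < j) (hw : x i < x j)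
    (k t : ℕ) : cnt x k t ≤ cnt (x * Equiv.swap i j) k t := by
  have hijv : i.val < j.val := hij
  rcases le_or_gt k i.val with hk | hk
  · refine le_of_eq (cnt_congr ?_ t).symm
    intro m hm
    have hmi : m ≠ i := fun h => by rw [h] at hm; omega
    have hmj : m ≠ j := fun h => by rw [h] at hm; omega
    show x (Equiv.swap i j m) = x m
    rw [Equiv.swap_apply_of_ne_of_ne hmi hmj]
  rcases le_or_gt k j.val with hkj | hkj
  · -- middle case: subset
    unfold cnt
    apply Finset.card_le_card
    intro m hm
    simp only [Finset.mem_filter, Finset.mem_univ, true_and] at hm ⊢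
    obtain ⟨h1, h2⟩ := hm
    refine ⟨h1, ?_⟩
    show t ≤ (x (Equiv.swap i j m)).val
    have hmj : m ≠ j := fun h => by rw [h] at h1; omega
    rcases eq_or_ne m i with rfl | hmi
    · rw [Equiv.swap_apply_left]
      have : (x m).val ≤ (x j).val := le_of_lt hw
      omega
    · rw [Equiv.swap_apply_of_ne_of_ne hmi hmj]
      exact h2
  · exact le_of_eq (cnt_mul_swap_high (by omega) (by omega) t).symm

theorem cnt_le_of_step {x y : Perm (Fin n)} (hl : permLen x < permLen y)
    (hs : ∃ i j : Fin n, y = x * Equiv.swap i j) (k t : ℕ) : cnt x k t ≤ cnt y k t := by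
  obtain ⟨i, j, rfl⟩ := hs
  rcases eq_or_ne i j with rfl | hne
  · simp only [Equiv.swap_self] at hl
    exfalso
    rw [show (x * Equiv.refl (Fin n) : Perm (Fin n)) = x from by ext m; simp] at hl
    exact lt_irrefl _ hl
  have hxij : x i ≠ x j := fun h => hne (x.injective h)
  rcases hne.lt_or_gt with hij | hij
  · rcases hxij.lt_or_gt with hw | hw
    · exact cnt_le_mul_swap hij hw k t
    · exfalso
      set y := x * Equiv.swap i j with hy
      have hyi : y i = x j := by simp [hy, Equiv.Perm.mul_apply]
      have hyj : y j = x i := by simp [hy, Equiv.Perm.mul_apply]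
      have hyx : y * Equiv.swap i j = x := by
        rw [hy, mul_assoc, Equiv.swap_mul_self, mul_one]
      have := permLen_lt_swap (w := y) hij (by rw [hyi, hyj]; exact hw)
      rw [hyx] at this
      omega
  · rw [Equiv.swap_comm] at *
    have hxji : x j ≠ x i := fun h => hne.symm (x.injective h)
    rcases hxji.lt_or_gt with hw | hw
    · exact cnt_le_mul_swap hij hw k t
    · exfalso
      set y := x * Equiv.swap j i with hy
      have hyi : y j = x i := by simp [hy, Equiv.Perm.mul_apply]
      have hyj : y i = x j := by simp [hy, Equiv.Perm.mul_apply]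
      have hyx : y * Equiv.swap j i = x := by
        rw [hy, mul_assoc, Equiv.swap_mul_self, mul_one]
      have := permLen_lt_swap (w := y) hij (by rw [hyi, hyj]; exact hw)
      rw [hyx] at this
      omega

theorem easy {u v : Perm (Fin n)} (h : BruhatLE u v) (k t : ℕ) : cnt u k t ≤ cnt v k t := by
  induction h with
  | refl => exact le_refl _
  | tail _ hr ih => exact le_trans ih (cnt_le_of_step hr.1 hr.2 k t)

end EasyDirection

section HardDirection

theorem descent {u v : Perm (Fin n)} (hne : u ≠ v) (H : ∀ k t, cnt u k t ≤ cnt v k t) :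
    ∃ v' : Perm (Fin n), (permLen v' < permLen v ∧ ∃ i j : Fin n, v = v' * Equiv.swap i j) ∧
      ∀ k t, cnt u k t ≤ cnt v' k t := by
  classical
  set S := Finset.univ.filter fun m : Fin n => u m ≠ v m with hSdef
  have hS : S.Nonempty := by
    rw [hSdef, Finset.filter_nonempty_iff]
    by_contra h
    push_neg at h
    exact hne (Equiv.ext fun m => by simpa using h m (Finset.mem_univ m))
  set i := S.min' hS with hidef
  have hiuv : u i ≠ v i := (Finset.mem_filter.1 (S.min'_mem hS)).2
  have hbelow : ∀ m : Fin n, m.val < i.val → u m = v m := by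
    intro m hm
    by_contra h
    have hmS : m ∈ S := Finset.mem_filter.2 ⟨Finset.mem_univ m, h⟩
    have hle := S.min'_le m hmS
    rw [Fin.le_def] at hle
    omega
  have hab : (u i).val < (v i).val := by
    have h1 := H (i.val + 1) (u i).val
    rw [cnt_succ, cnt_succ, cnt_congr hbelow, if_pos (le_refl _)] at h1
    have hvne : (u i).val ≠ (v i).val := fun h => hiuv (Fin.ext h)
    by_cases hc : (u i).val ≤ (v i).val
    · omega
    · rw [if_neg (by omega)] at h1; omega
  set T := Finset.univ.filter (fun m : Fin n => i < m ∧ u i ≤ v m ∧ v m < v i) with hTdef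
  have hT : T.Nonempty := by
    refine ⟨v.symm (u i), ?_⟩
    rw [hTdef, Finset.mem_filter]
    have hvp : v (v.symm (u i)) = u i := v.apply_symm_apply _
    have hpi : v.symm (u i) ≠ i := by
      intro h
      rw [h] at hvp
      exact hiuv hvp.symm
    refine ⟨Finset.mem_univ _, ?_, by rw [hvp], by rw [hvp]; exact Fin.lt_def.mpr hab⟩
    have hnotlt : ¬ v.symm (u i) < i := by
      intro hlt
      have h1 : u (v.symm (u i)) = v (v.symm (u i)) := hbelow _ (Fin.lt_def.mp hlt)
      rw [hvp] at h1
      exact hpi (u.injective h1)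
    rcases lt_trichotomy (v.symm (u i)) i with h | h | h
    · exact absurd h hnotlt
    · exact absurd h hpi
    · exact h
  set j := T.min' hT with hjdef
  have hjT := Finset.mem_filter.1 (T.min'_mem hT)
  obtain ⟨_, hij, haj, hjb⟩ := hjT
  have hjmin : ∀ m : Fin n, i < m → m < j → ¬(u i ≤ v m ∧ v m < v i) := by
    intro m h1 h2 hcon
    have hmT : m ∈ T := Finset.mem_filter.2 ⟨Finset.mem_univ m, h1, hcon.1, hcon.2⟩
    exact absurd h2 (not_lt.2 (T.min'_le m hmT))
  set v' := v * Equiv.swap i j with hv'def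
  have hv'i : v' i = v j := by
    rw [hv'def]; simp [Equiv.Perm.mul_apply, Equiv.swap_apply_left]
  have hv'j : v' j = v i := by
    rw [hv'def]; simp [Equiv.Perm.mul_apply, Equiv.swap_apply_right]
  have hv'other : ∀ m : Fin n, m ≠ i → m ≠ j → v' m = v m := by
    intro m h1 h2
    rw [hv'def]
    simp [Equiv.Perm.mul_apply, Equiv.swap_apply_of_ne_of_ne h1 h2]
  have hvv' : v = v' * Equiv.swap i j := by
    rw [hv'def, mul_assoc, Equiv.swap_mul_self, mul_one]
  have hperm : permLen v' < permLen v := by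
    have := permLen_lt_swap (w := v') hij (by rw [hv'i, hv'j]; exact hjb)
    rwa [← hvv'] at this
  refine ⟨v', ⟨hperm, i, j, hvv'⟩, ?_⟩
  intro k t
  have hijv : i.val < j.val := Fin.lt_def.mp hij
  have hjbv : (v j).val < (v i).val := Fin.lt_def.mp hjb
  have hajv : (u i).val ≤ (v j).val := Fin.le_def.mp haj
  rcases le_or_gt k i.val with hk | hk
  · -- low case
    have heq : cnt v' k t = cnt v k t := by
      apply cnt_congr
      intro m hm
      exact hv'other m (fun h => by rw [h] at hm; omega) (fun h => by rw [h] at hm; omega)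
    rw [heq]; exact H k t
  rcases le_or_gt k j.val with hkj | hkj
  swap
  · -- high case
    have heq : cnt v' k t = cnt v k t := by
      rw [hv'def]; exact cnt_mul_swap_high (by omega) (by omega) t
    rw [heq]; exact H k t
  · -- middle case: i.val < k ≤ j.val
    have hmid_eq : ((t ≤ (v j).val) ↔ (t ≤ (v i).val)) → cnt v' k t = cnt v k t := by
      intro hcond
      unfold cnt
      congr 1
      apply Finset.filter_congr
      intro m _
      constructor
      · rintro ⟨h1, h2⟩
        refine ⟨h1, ?_⟩
        have hmj : m ≠ j := fun h => by rw [h] at h1; omega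
        by_cases hmi : m = i
        · subst hmi; rw [hv'i] at h2; exact hcond.1 h2
        · rw [hv'other m hmi hmj] at h2; exact h2
      · rintro ⟨h1, h2⟩
        refine ⟨h1, ?_⟩
        have hmj : m ≠ j := fun h => by rw [h] at h1; omega
        by_cases hmi : m = i
        · subst hmi; rw [hv'i]; exact hcond.2 h2
        · rw [hv'other m hmi hmj]; exact h2
    by_cases ht1 : t ≤ (v j).val
    · rw [hmid_eq (iff_of_true ht1 (by omega))]; exact H k t
    by_cases ht2 : t ≤ (v i).val
    swap
    · rw [hmid_eq (iff_of_false ht1 ht2)]; exact H k t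
    · -- key case: (v j).val < t ≤ (v i).val
      have hsplitv : cnt v k t = cnt v' k t + 1 := by
        unfold cnt
        have hins : (Finset.univ.filter fun m : Fin n => m.val < k ∧ t ≤ (v m).val) =
            insert i (Finset.univ.filter fun m : Fin n => m.val < k ∧ t ≤ (v' m).val) := by
          ext m
          simp only [Finset.mem_filter, Finset.mem_insert, Finset.mem_univ, true_and]
          constructor
          · rintro ⟨h1, h2⟩
            by_cases hmi : m = i
            · exact Or.inl hmi
            · have hmj : m ≠ j := fun h => by rw [h] at h1; omega
              exact Or.inr ⟨h1, by rw [hv'other m hmi hmj]; exact h2⟩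
          · rintro (rfl | ⟨h1, h2⟩)
            · exact ⟨hk, ht2⟩
            · by_cases hmi : m = i
              · subst hmi; rw [hv'i] at h2; exact absurd h2 ht1
              · have hmj : m ≠ j := fun h => by rw [h] at h1; omega
                rw [hv'other m hmi hmj] at h2
                exact ⟨h1, h2⟩
        rw [hins, Finset.card_insert_of_notMem]
        simp only [Finset.mem_filter, Finset.mem_univ, true_and, not_and]
        intro _
        rw [hv'i]
        exact ht1
      have hat : (u i).val ≤ t := by omega
      have e1 := cnt_split u k hat
      have e2 := cnt_split v k hat
      have e3 : cntIn v k (u i).val t = cntIn v i.val (u i).val t := by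
        unfold cntIn
        congr 1
        apply Finset.filter_congr
        intro m _
        constructor
        · rintro ⟨h1, h2, h3⟩
          refine ⟨?_, h2, h3⟩
          by_contra hcon
          by_cases hmi : m = i
          · subst hmi; omega
          · have himv : i.val < m.val := by
              have : m.val ≠ i.val := fun h => hmi (Fin.ext h)
              omega
            exact hjmin m (Fin.lt_def.mpr himv) (Fin.lt_def.mpr (by omega))
              ⟨Fin.le_def.mpr h2, Fin.lt_def.mpr (by omega)⟩
        · rintro ⟨h1, h2, h3⟩
          exact ⟨by omega, h2, h3⟩
      have e4 : cntIn u i.val (u i).val t + 1 ≤ cntIn u k (u i).val t := by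
        unfold cntIn
        have hnotmem : i ∉ (Finset.univ.filter fun m : Fin n =>
            m.val < i.val ∧ (u i).val ≤ (u m).val ∧ (u m).val < t) := by simp
        rw [← Finset.card_insert_of_notMem hnotmem]
        apply Finset.card_le_card
        intro m hm
        rcases Finset.mem_insert.1 hm with rfl | hm'
        · simp only [Finset.mem_filter, Finset.mem_univ, true_and]
          exact ⟨hk, le_refl _, by omega⟩
        · simp only [Finset.mem_filter, Finset.mem_univ, true_and] at hm' ⊢
          exact ⟨by omega, hm'.2⟩
      have e5 : cntIn u i.val (u i).val t = cntIn v i.val (u i).val t :=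
        cntIn_congr hbelow _ t
      have h6 := H k (u i).val
      omega

theorem hard : ∀ N : ℕ, ∀ u v : Perm (Fin n), permLen v ≤ N →
    (∀ k t, cnt u k t ≤ cnt v k t) → BruhatLE u v := by
  intro N
  induction N with
  | zero =>
      intro u v hN H
      rcases eq_or_ne u v with rfl | hne
      · exact Relation.ReflTransGen.refl
      · obtain ⟨v', ⟨hperm, _⟩, _⟩ := descent hne H
        omega
  | succ N ih =>
      intro u v hN H
      rcases eq_or_ne u v with rfl | hne
      · exact Relation.ReflTransGen.refl
      · obtain ⟨v', ⟨hperm, hij⟩, H'⟩ := descent hne H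
        exact (ih u v' (by omega) H').tail ⟨hperm, hij⟩

end HardDirection

end Stmt9

/-- The tableau criterion for Bruhat order on `S_n`: `u ≤ v` in Bruhat order if and
only if for every `k = 1, …, n`, the set `{u(1), …, u(k)}` is less than or equal to
`{v(1), …, v(k)}` in Gale order. -/
theorem stmt_9 (n : ℕ) (u v : Perm (Fin n)) :
    BruhatLE u v ↔ ∀ k : ℕ, 1 ≤ k → k ≤ n → galeLE (firstVals u k) (firstVals v k) := by
  constructor
  · intro h k _ _
    rw [Stmt9.gale_iff_cnt]
    intro t
    exact Stmt9.easy h k t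
  · intro h
    apply Stmt9.hard (permLen v) u v (le_refl _)
    intro k t
    rcases Nat.eq_zero_or_pos k with rfl | hk
    · rw [Stmt9.cnt_zero, Stmt9.cnt_zero]
    rcases le_or_gt k n with hkn | hkn
    · exact (Stmt9.gale_iff_cnt u v k).1 (h k hk hkn) t
    · rw [Stmt9.cnt_ge (le_of_lt hkn), Stmt9.cnt_ge (le_of_lt hkn)]
      rcases Nat.eq_zero_or_pos n with hn | hn
      · subst hn
        rw [Stmt9.cnt_zero, Stmt9.cnt_zero]
      · exact (Stmt9.gale_iff_cnt u v n).1 (h n hn (le_refl n)) t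
end

section
/- Let W be the symmetric group S_n and suppose w ∈ S_n contains the pattern 4231, i.e., there are positions a < b < c < d with w(d) < w(b) < w(c) < w(a). Then among the positive roots β labeling covers below w (i.e., w ⋗ wr_β), there is a nontrivial linear dependence; consequently the labels of the covers below w are linearly dependent. -/
open Equiv

/-- The positive root `e_j - e_i` (for `i < j`) of type `A_{n-1}`, as a vector in `ℝ^n`. -/
def typeARoot {n : ℕ} (i j : Fin n) : Fin n → ℝ :=
  fun k => (if k = j then 1 else 0) - (if k = i then 1 else 0)

/-- The labels of the covers below `w`: positive roots `β = e_j - e_i` such that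
`w ⋗ w r_β` is a cover in Bruhat order, i.e. `ℓ(w r_β) + 1 = ℓ(w)`. -/
def coverLabels {n : ℕ} (w : Perm (Fin n)) : Set (Fin n → ℝ) :=
  {β | ∃ i j : Fin n, i < j ∧ permLen (w * Equiv.swap i j) + 1 = permLen w ∧
    β = typeARoot i j}

lemma swap_reversed {n : ℕ} {i j p q : Fin n} (hij : i < j) (hpq : p < q)
    (h : ¬ Equiv.swap i j p < Equiv.swap i j q) :
    (p = i ∧ i < q ∧ q < j) ∨ (q = j ∧ i < p ∧ p < j) ∨ (p = i ∧ q = j) := by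
  by_cases hpi : p = i
  · subst hpi
    by_cases hqj : q = j
    · exact Or.inr (Or.inr ⟨rfl, hqj⟩)
    · left
      refine ⟨rfl, hpq, ?_⟩
      have hqi : q ≠ p := hpq.ne'
      rw [Equiv.swap_apply_left, Equiv.swap_apply_of_ne_of_ne hqi hqj] at h
      exact lt_of_le_of_ne (not_lt.mp h) hqj
  · by_cases hpj : p = j
    · subst hpj
      exfalso
      have hqj : q ≠ p := hpq.ne'
      have hqi : q ≠ i := fun hq => absurd (hq ▸ hpq) (not_lt.mpr hij.le)
      rw [Equiv.swap_apply_right, Equiv.swap_apply_of_ne_of_ne hqi hqj] at h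
      exact h (hij.trans hpq)
    · by_cases hqi : q = i
      · exfalso
        subst hqi
        rw [Equiv.swap_apply_left, Equiv.swap_apply_of_ne_of_ne hpi hpj] at h
        exact h (hpq.trans hij)
      · by_cases hqj : q = j
        · subst hqj
          right; left
          rw [Equiv.swap_apply_right, Equiv.swap_apply_of_ne_of_ne hpi hpj] at h
          exact ⟨rfl, lt_of_le_of_ne (not_lt.mp h) (Ne.symm hpi), hpq⟩
        · exfalso
          rw [Equiv.swap_apply_of_ne_of_ne hpi hpj,
            Equiv.swap_apply_of_ne_of_ne hqi hqj] at h
          exact h hpq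

lemma permLen_swap {n : ℕ} (w : Perm (Fin n)) (i j : Fin n) (hij : i < j)
    (hw : w j < w i) (hmin : ∀ k, i < k → k < j → w k < w j ∨ w i < w k) :
    permLen (w * Equiv.swap i j) + 1 = permLen w := by
  classical
  set t := Equiv.swap i j with ht
  set v := w * t with hv
  have hvapp : ∀ m, v m = w (t m) := fun m => rfl
  have htt : ∀ m, t (t m) = m := fun m => Equiv.swap_apply_self i j m
  have hti : t i = j := Equiv.swap_apply_left i j
  have htj : t j = i := Equiv.swap_apply_right i j
  set Invw := Finset.univ.filter fun p : Fin n × Fin n => p.1 < p.2 ∧ w p.2 < w p.1 with hIw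
  set Invv := Finset.univ.filter fun p : Fin n × Fin n => p.1 < p.2 ∧ v p.2 < v p.1 with hIv
  have memw : ∀ p : Fin n × Fin n, p ∈ Invw ↔ p.1 < p.2 ∧ w p.2 < w p.1 := by
    intro p; simp [hIw]
  have memv : ∀ p : Fin n × Fin n, p ∈ Invv ↔ p.1 < p.2 ∧ v p.2 < v p.1 := by
    intro p; simp [hIv]
  set g : Fin n × Fin n → Fin n × Fin n :=
    fun p => if t p.1 < t p.2 then (t p.1, t p.2) else p with hg
  have hgg : ∀ p : Fin n × Fin n, p.1 < p.2 → g (g p) = p := by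
    intro p hp
    by_cases h : t p.1 < t p.2
    · simp only [hg, if_pos h, htt, if_pos hp]
    · simp only [hg, if_neg h]
  have hmemA : ∀ p ∈ Invv, g p ∈ Invw.erase (i, j) := by
    rintro ⟨p1, p2⟩ hp
    have hlt : p1 < p2 := ((memv _).mp hp).1
    have hinv : w (t p2) < w (t p1) := ((memv _).mp hp).2
    by_cases h : t p1 < t p2
    · simp only [hg, if_pos h]
      rw [Finset.mem_erase]
      constructor
      · intro heq
        have h1 : t p1 = i := (Prod.mk.injEq _ _ _ _ ▸ heq).1
        have h2 : t p2 = j := (Prod.mk.injEq _ _ _ _ ▸ heq).2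
        have : p1 = j := by rw [← htt p1, h1, hti]
        have h2' : p2 = i := by rw [← htt p2, h2, htj]
        rw [this, h2'] at hlt
        exact absurd (hlt.trans hij) (lt_irrefl _)
      · exact (memw _).mpr ⟨h, hinv⟩
    · simp only [hg, if_neg h]
      rcases swap_reversed hij hlt h with ⟨hp1, hq1, hq2⟩ | ⟨hq, hp1, hp2⟩ | ⟨hp1, hq⟩
      · have hne1 : p2 ≠ i := hq1.ne'
        have hne2 : p2 ≠ j := hq2.ne
        rw [hp1, hti, Equiv.swap_apply_of_ne_of_ne hne1 hne2] at hinv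
        rw [Finset.mem_erase]
        refine ⟨by simp [hne2], (memw _).mpr ⟨hlt, ?_⟩⟩
        rw [hp1]
        exact hinv.trans hw
      · have hne1 : p1 ≠ i := hp1.ne'
        have hne2 : p1 ≠ j := hp2.ne
        rw [hq, htj, Equiv.swap_apply_of_ne_of_ne hne1 hne2] at hinv
        rw [Finset.mem_erase]
        refine ⟨by simp [hne1], (memw _).mpr ⟨hlt, ?_⟩⟩
        rw [hq]
        exact hw.trans hinv
      · exfalso
        rw [hp1, hq, hti, htj] at hinv
        exact absurd (hinv.trans hw) (lt_irrefl _)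
  have hmemB : ∀ p ∈ Invw.erase (i, j), g p ∈ Invv := by
    rintro ⟨p1, p2⟩ hp
    rw [Finset.mem_erase] at hp
    obtain ⟨hne, hpm⟩ := hp
    have hlt : p1 < p2 := ((memw _).mp hpm).1
    have hinv : w p2 < w p1 := ((memw _).mp hpm).2
    by_cases h : t p1 < t p2
    · simp only [hg, if_pos h]
      refine (memv _).mpr ⟨h, ?_⟩
      simp only [hvapp, htt]
      exact hinv
    · simp only [hg, if_neg h]
      refine (memv _).mpr ⟨hlt, ?_⟩
      simp only [hvapp]
      rcases swap_reversed hij hlt h with ⟨hp1, hq1, hq2⟩ | ⟨hq, hp1, hp2⟩ | ⟨hp1, hq⟩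
      · have hne1 : p2 ≠ i := hq1.ne'
        have hne2 : p2 ≠ j := hq2.ne
        rw [hp1, hti, Equiv.swap_apply_of_ne_of_ne hne1 hne2]
        rw [hp1] at hinv
        rcases hmin p2 hq1 hq2 with h1 | h1
        · exact h1
        · exact absurd (h1.trans hinv) (lt_irrefl _)
      · have hne1 : p1 ≠ i := hp1.ne'
        have hne2 : p1 ≠ j := hp2.ne
        rw [hq, htj, Equiv.swap_apply_of_ne_of_ne hne1 hne2]
        rw [hq] at hinv
        rcases hmin p1 hp1 hp2 with h1 | h1
        · exact absurd (hinv.trans h1) (lt_irrefl _)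
        · exact h1
      · exact absurd (Prod.ext hp1 hq) hne
  have hcard : Invv.card = (Invw.erase (i, j)).card := by
    refine Finset.card_bij' (fun p _ => g p) (fun p _ => g p) hmemA hmemB ?_ ?_
    · intro p hp
      exact hgg p ((memv _).mp hp).1
    · intro p hp
      exact hgg p ((memw _).mp (Finset.mem_of_mem_erase hp)).1
  have hmem : (i, j) ∈ Invw := (memw _).mpr ⟨hij, hw⟩
  have h1 : Invw.card ≠ 0 := Finset.card_ne_zero_of_mem hmem
  have h2 := Finset.card_erase_of_mem hmem
  show Invv.card + 1 = Invw.card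
  omega

/-- Cover labels within the position window `[i,j]` and value window `[w j, w i]`. -/
def covSet {n : ℕ} (w : Perm (Fin n)) (i j : Fin n) : Set (Fin n → ℝ) :=
  {β | ∃ p q : Fin n, i ≤ p ∧ p < q ∧ q ≤ j ∧ w j ≤ w q ∧ w q < w p ∧ w p ≤ w i ∧
    permLen (w * Equiv.swap p q) + 1 = permLen w ∧ β = typeARoot p q}

lemma covSet_subset {n : ℕ} (w : Perm (Fin n)) (i j : Fin n) :
    covSet w i j ⊆ coverLabels w := by
  rintro β ⟨p, q, _, hpq, _, _, _, _, hcov, rfl⟩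
  exact ⟨p, q, hpq, hcov, rfl⟩

lemma typeARoot_add {n : ℕ} (i j k : Fin n) :
    typeARoot i k = typeARoot i j + typeARoot j k := by
  funext m
  simp only [typeARoot, Pi.add_apply]
  ring

lemma root_mem_span_aux {n : ℕ} (w : Perm (Fin n)) :
    ∀ (m : ℕ) (i j : Fin n), j.val - i.val ≤ m → i < j → w j < w i →
      typeARoot i j ∈ Submodule.span ℝ (covSet w i j) := by
  intro m
  induction m with
  | zero =>
    intro i j hle hij _
    exact absurd hij (by rw [Fin.lt_def]; omega)
  | succ m ih =>
    intro i j hle hij hw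
    by_cases hex : ∃ k, i < k ∧ k < j ∧ w j < w k ∧ w k < w i
    · obtain ⟨k, hik, hkj, hwjk, hwki⟩ := hex
      rw [typeARoot_add i k j]
      have hik' : k.val - i.val ≤ m := by
        have := hkj; rw [Fin.lt_def] at this hij
        have h2 := hik; rw [Fin.lt_def] at h2
        omega
      have hkj' : j.val - k.val ≤ m := by
        have := hik; rw [Fin.lt_def] at this hij
        have h2 := hkj; rw [Fin.lt_def] at h2
        omega
      have h1 := ih i k hik' hik hwki
      have h2 := ih k j hkj' hkj hwjk
      have hsub1 : covSet w i k ⊆ covSet w i j := by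
        rintro β ⟨p, q, h₁, h₂, h₃, h₄, h₅, h₆, h₇, rfl⟩
        exact ⟨p, q, h₁, h₂, h₃.trans hkj.le, hwjk.le.trans h₄, h₅, h₆, h₇, rfl⟩
      have hsub2 : covSet w k j ⊆ covSet w i j := by
        rintro β ⟨p, q, h₁, h₂, h₃, h₄, h₅, h₆, h₇, rfl⟩
        exact ⟨p, q, hik.le.trans h₁, h₂, h₃, h₄, h₅, h₆.trans hwki.le, h₇, rfl⟩
      exact Submodule.add_mem _ (Submodule.span_mono hsub1 h1)
        (Submodule.span_mono hsub2 h2)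
    · push_neg at hex
      have hmin : ∀ k, i < k → k < j → w k < w j ∨ w i < w k := by
        intro k hik hkj
        rcases lt_trichotomy (w k) (w j) with h | h | h
        · exact Or.inl h
        · exact absurd (w.injective h) hkj.ne
        · exact Or.inr (lt_of_le_of_ne (hex k hik hkj h)
            (fun he => hik.ne' (w.injective he.symm)))
      exact Submodule.subset_span
        ⟨i, j, le_refl i, hij, le_refl j, le_refl _, hw, le_refl _,
          permLen_swap w i j hij hw hmin, rfl⟩

lemma typeARoot_inj {n : ℕ} {p q p' q' : Fin n} (h1 : p < q) (h2 : p' < q')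
    (h : typeARoot p q = typeARoot p' q') : p = p' ∧ q = q' := by
  have hq := congrFun h q
  have hp := congrFun h p
  simp only [typeARoot, if_pos rfl] at hq hp
  rw [if_neg h1.ne'] at hq
  rw [if_neg h1.ne] at hp
  constructor
  · by_contra hpp
    rw [if_neg hpp] at hp
    by_cases hqq : p = q'
    · rw [if_pos hqq] at hp; norm_num at hp
    · rw [if_neg hqq] at hp; norm_num at hp
  · by_contra hqq
    rw [if_neg hqq] at hq
    by_cases hpp : q = p'
    · rw [if_pos hpp] at hq; norm_num at hq
    · rw [if_neg hpp] at hq; norm_num at hq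

/-- If `w ∈ S_n` contains the pattern `4231`, i.e. there are positions
`a < b < c < d` with `w(d) < w(b) < w(c) < w(a)`, then the positive roots labeling
the covers below `w` in Bruhat order are linearly dependent. -/
theorem stmt_14 (n : ℕ) (w : Perm (Fin n))
    (hpat : ∃ a b c d : Fin n, a < b ∧ b < c ∧ c < d ∧
      w d < w b ∧ w b < w c ∧ w c < w a) :
    ¬ LinearIndependent ℝ (fun x : coverLabels w => (x : Fin n → ℝ)) := by
  intro hLI
  obtain ⟨a, b, c, d, hab, hbc, hcd, hdb, hbc', hca⟩ := hpat
  have hwac : w c < w a := hca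
  have hwcd : w d < w c := hdb.trans hbc'
  have hwab : w b < w a := hbc'.trans hca
  have hwbd : w d < w b := hdb
  have s1 : typeARoot a c ∈ Submodule.span ℝ (covSet w a c) :=
    root_mem_span_aux w _ a c le_rfl (hab.trans hbc) hwac
  have s2 : typeARoot c d ∈ Submodule.span ℝ (covSet w c d) :=
    root_mem_span_aux w _ c d le_rfl hcd hwcd
  have s3 : typeARoot a b ∈ Submodule.span ℝ (covSet w a b) :=
    root_mem_span_aux w _ a b le_rfl hab hwab
  have s4 : typeARoot b d ∈ Submodule.span ℝ (covSet w b d) :=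
    root_mem_span_aux w _ b d le_rfl (hbc.trans hcd) hwbd
  set T1 := covSet w a c ∪ covSet w c d with hT1
  set T2 := covSet w a b ∪ covSet w b d with hT2
  have hv1 : typeARoot a d ∈ Submodule.span ℝ T1 := by
    rw [typeARoot_add a c d]
    exact Submodule.add_mem _
      (Submodule.span_mono Set.subset_union_left s1)
      (Submodule.span_mono Set.subset_union_right s2)
  have hv2 : typeARoot a d ∈ Submodule.span ℝ T2 := by
    rw [typeARoot_add a b d]
    exact Submodule.add_mem _
      (Submodule.span_mono Set.subset_union_left s3)
      (Submodule.span_mono Set.subset_union_right s4)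
  have hT1sub : T1 ⊆ coverLabels w :=
    Set.union_subset (covSet_subset w a c) (covSet_subset w c d)
  have hT2sub : T2 ⊆ coverLabels w :=
    Set.union_subset (covSet_subset w a b) (covSet_subset w b d)
  -- key: membership in span of intersection
  obtain ⟨c1, hs1, he1⟩ := Submodule.mem_span_set.mp hv1
  obtain ⟨c2, hs2, he2⟩ := Submodule.mem_span_set.mp hv2
  have hceq : c1 = c2 := by
    have hl := (linearIndepOn_iff (v := id)).mp hLI (c1 - c2) ?_ ?_
    · exact sub_eq_zero.mp hl
    · rw [Finsupp.mem_supported]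
      refine subset_trans (Finset.coe_subset.mpr (Finsupp.support_sub)) ?_
      rw [Finset.coe_union]
      exact Set.union_subset (hs1.trans hT1sub) (hs2.trans hT2sub)
    · rw [map_sub]
      rw [Finsupp.linearCombination_apply, Finsupp.linearCombination_apply]
      simp only [id]
      rw [he1, he2]  -- might need sum shape adjustment
      ring
  have hkey : typeARoot a d ∈ Submodule.span ℝ (T1 ∩ T2) := by
    refine Submodule.mem_span_set.mpr ⟨c1, ?_, he1⟩
    refine Set.subset_inter hs1 ?_
    rw [hceq]; exact hs2
  -- intersection is supported on positions ≤ b or ≥ c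
  set Z : Set (Fin n → ℝ) :=
    {β | ∃ p q : Fin n, p < q ∧ (q ≤ b ∨ c ≤ p) ∧ β = typeARoot p q} with hZ
  have hTZ : T1 ∩ T2 ⊆ Z := by
    rintro β ⟨h1 | h1, h2 | h2⟩
    · obtain ⟨p, q, _, hpq, hqb, _, _, _, _, rfl⟩ := h2
      exact ⟨p, q, hpq, Or.inl hqb, rfl⟩
    · obtain ⟨p, q, _, hpq, _, hwq, hwlt, hwp, _, rfl⟩ := h1
      obtain ⟨p', q', _, hpq', _, _, _, hwp', _, heq⟩ := h2
      obtain ⟨hpp, hqq⟩ := typeARoot_inj hpq hpq' heq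
      exfalso
      rw [← hpp] at hwp'
      exact absurd ((hwq.trans_lt hwlt).trans_le hwp') (not_lt.mpr hbc'.le)
    · obtain ⟨p, q, hcp, hpq, _, _, _, _, _, rfl⟩ := h1
      obtain ⟨p', q', _, hpq', hqb, _, _, _, _, heq⟩ := h2
      obtain ⟨hpp, hqq⟩ := typeARoot_inj hpq hpq' heq
      exfalso
      rw [hpp] at hcp
      exact absurd ((hcp.trans_lt hpq').trans_le hqb) (not_lt.mpr hbc.le)
    · obtain ⟨p, q, hcp, hpq, _, _, _, _, _, rfl⟩ := h1
      exact ⟨p, q, hpq, Or.inr hcp, rfl⟩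
  -- the functional
  set φ : (Fin n → ℝ) →ₗ[ℝ] ℝ :=
    ∑ k ∈ Finset.univ.filter (· ≤ b), LinearMap.proj k with hφ
  have hφroot : ∀ p q : Fin n, φ (typeARoot p q)
      = (if q ≤ b then (1:ℝ) else 0) - (if p ≤ b then 1 else 0) := by
    intro p q
    rw [hφ]
    rw [LinearMap.sum_apply]
    simp only [LinearMap.proj_apply, typeARoot]
    rw [Finset.sum_sub_distrib]
    rw [Finset.sum_ite_eq' _ q (fun _ => (1:ℝ)), Finset.sum_ite_eq' _ p (fun _ => (1:ℝ))]
    simp [Finset.mem_filter]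
  have hφZ : ∀ β ∈ Z, φ β = 0 := by
    rintro β ⟨p, q, hpq, hcase, rfl⟩
    rw [hφroot]
    rcases hcase with h | h
    · rw [if_pos h, if_pos ((hpq.le).trans h)]; ring
    · have hqb : ¬ q ≤ b := fun hh => absurd ((hbc.trans_le h).trans hpq) (not_lt.mpr hh)
      have hpb : ¬ p ≤ b := fun hh => absurd (hbc.trans_le h) (not_lt.mpr hh)
      rw [if_neg hqb, if_neg hpb]; ring
  have hker : Submodule.span ℝ Z ≤ LinearMap.ker φ := by
    rw [Submodule.span_le]
    intro β hβ
    exact LinearMap.mem_ker.mpr (hφZ β hβ)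
  have hzero : φ (typeARoot a d) = 0 :=
    hker (Submodule.span_mono hTZ hkey)
  rw [hφroot] at hzero
  have hdb' : ¬ d ≤ b := fun hh => absurd (hbc.trans hcd) (not_lt.mpr hh)
  have hab' : a ≤ b := hab.le
  rw [if_neg hdb', if_pos hab'] at hzero
  norm_num at hzero
end

section
/- Let w ∈ S_n avoid the pattern 4231 and contain 3412, and suppose that every minimal-content 3412 occurrence of w uses positions 1 and n and values 1 and n, and that the minimal content exceeds 1; then w is the permutation with w(1) = n−1, w(2) = n, w(n−1) = 1, w(n) = 2, and w(i) = n + 1 − i for 3 ≤ i ≤ n−2. -/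
open Equiv

variable {n : ℕ}

/-- Suppose `w ∈ S_n` avoids `4231`, contains `3412`, every minimal-content
`3412` occurrence of `w` uses positions `1` and `n` and values `1` and `n`, and
the minimal content exceeds `1`.  Then `w` is the permutation with (1-indexed)
`w(1) = n-1`, `w(2) = n`, `w(n-1) = 1`, `w(n) = 2` and `w(i) = n + 1 - i` for
`3 ≤ i ≤ n-2`. -/
theorem stmt_16 (hn : 4 ≤ n) (w : Perm (Fin n))
    (havoid : ¬ ∃ a b c d : Fin n, a < b ∧ b < c ∧ c < d ∧
      w d < w b ∧ w b < w c ∧ w c < w a)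
    (hcont : Contains3412 w)
    (hmin : ∀ a b c d : Fin n, Occ3412 w a b c d →
      occContent w a b c d = mcontent w →
      a.val = 0 ∧ d.val = n - 1 ∧ (w b).val = n - 1 ∧ (w c).val = 0)
    (hmc : 1 < mcontent w) :
    (w ⟨0, by omega⟩).val = n - 2 ∧ (w ⟨1, by omega⟩).val = n - 1 ∧
      (w ⟨n - 2, by omega⟩).val = 0 ∧ (w ⟨n - 1, by omega⟩).val = 1 ∧
      ∀ i : Fin n, 2 ≤ i.val → i.val ≤ n - 3 → (w i).val = n - 1 - i.val := by
  classical
  have winj : Function.Injective w := w.injective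
  obtain ⟨a0, b0, c0, d0, h0⟩ := hcont
  have hne : {m | ∃ a b c d, Occ3412 w a b c d ∧ occContent w a b c d = m}.Nonempty :=
    ⟨_, a0, b0, c0, d0, h0, rfl⟩
  obtain ⟨a, b, c, d, hocc, heq⟩ := Nat.sInf_mem hne
  replace heq : occContent w a b c d = mcontent w := heq
  obtain ⟨ha, hd, hb, hc⟩ := hmin a b c d hocc heq
  obtain ⟨hab, hbc, hcd, hcd', hda, hab'⟩ := hocc
  -- the key comparison lemma
  have key : ∀ a' b' c' d' : Fin n, Occ3412 w a' b' c' d' →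
      ({i : Fin n | b' < i ∧ i < c' ∧ w d' < w i ∧ w i < w a'} ⊆
        {i : Fin n | b < i ∧ i < c ∧ w d < w i ∧ w i < w a}) →
      a'.val = 0 ∧ d'.val = n - 1 ∧ (w b').val = n - 1 ∧ (w c').val = 0 := by
    intro a' b' c' d' h hsub
    refine hmin _ _ _ _ h (le_antisymm ?_ (Nat.sInf_le ⟨a', b', c', d', h, rfl⟩))
    calc occContent w a' b' c' d' ≤ occContent w a b c d :=
          Nat.add_le_add_left (Set.ncard_le_ncard hsub (Set.toFinite _)) 1
      _ = mcontent w := heq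
  -- all values in the middle are between w d and w a
  have C1 : ∀ j, b < j → j < c → w d < w j ∧ w j < w a := by
    intro j hbj hjc
    constructor
    · by_contra hcon
      have hjd : j ≠ d := ne_of_lt (hjc.trans hcd)
      have hwjd : w j < w d := lt_of_le_of_ne (not_lt.1 hcon) fun h => hjd (winj h)
      have hk := key a b j d ⟨hab, hbj, hjc.trans hcd, hwjd, hda, hab'⟩
        (fun i hi => ⟨hi.1, hi.2.1.trans hjc, hi.2.2⟩)
      obtain ⟨hk1, hk2, hk3, hk4⟩ := hk
      exact (ne_of_lt hjc) (winj (Fin.ext (by omega : (w j).val = (w c).val)))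
    · by_contra hcon
      have hja : j ≠ a := (ne_of_lt ((hab.trans hbj))).symm
      have hwaj : w a < w j := lt_of_le_of_ne (not_lt.1 hcon) fun h => hja.symm (winj h)
      have hk := key a j c d ⟨hab.trans hbj, hjc, hcd, hcd', hda, hwaj⟩
        (fun i hi => ⟨hbj.trans hi.1, hi.2⟩)
      obtain ⟨hk1, hk2, hk3, hk4⟩ := hk
      exact (ne_of_lt hbj).symm (winj (Fin.ext (by omega : (w j).val = (w b).val)))
  -- the middle is decreasing
  have C2 : ∀ i j, b < i → i < j → j < c → w j < w i := by
    intro i j hbi hij hjc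
    by_contra hcon
    have hwij : w i < w j := lt_of_le_of_ne (not_lt.1 hcon) fun h => (ne_of_lt hij) (winj h)
    have hwdi := (C1 i hbi (hij.trans hjc)).1
    have hwia := (C1 i hbi (hij.trans hjc)).2
    have hk := key i j c d ⟨hij, hjc, hcd, hcd', hwdi, hwij⟩
      (fun k hk => ⟨(hbi.trans hij).trans hk.1, hk.2.1, hk.2.2.1, hk.2.2.2.trans hwia⟩)
    obtain ⟨hk1, hk2, hk3, hk4⟩ := hk
    have h1 : a.val < b.val := hab
    have h2 : b.val < i.val := hbi
    omega
  -- values between w d and w a occur only in the middle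
  have C3 : ∀ e, w d < w e → w e < w a → b < e ∧ e < c := by
    intro e h1 h2
    rcases lt_trichotomy e b with heb | heb | heb
    · exfalso
      have hea : e ≠ a := fun h => absurd h2 (by rw [h]; exact lt_irrefl _)
      have hae : a < e := lt_of_le_of_ne (Fin.le_def.2 (by omega)) (Ne.symm hea)
      have hk := key e b c d ⟨heb, hbc, hcd, hcd', h1, h2.trans hab'⟩
        (fun k hk => ⟨hk.1, hk.2.1, hk.2.2.1, hk.2.2.2.trans h2⟩)
      obtain ⟨hk1, hk2, hk3, hk4⟩ := hk
      have : a.val < e.val := hae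
      omega
    · exact absurd (h2.trans hab') (by rw [heb]; exact lt_irrefl _)
    · rcases lt_trichotomy e c with hec | hec | hec
      · exact ⟨heb, hec⟩
      · exact absurd (hcd'.trans h1) (by rw [hec]; exact lt_irrefl _)
      · exfalso
        have hed' : e ≠ d := fun h => absurd h1 (by rw [h]; exact lt_irrefl _)
        have hed : e < d := lt_of_le_of_ne (Fin.le_def.2 (by have := e.isLt; omega)) hed'
        have hk := key a b c e ⟨hab, hbc, hec, hcd'.trans h1, h2, hab'⟩
          (fun k hk => ⟨hk.1, hk.2.1, h1.trans hk.2.2.1, hk.2.2.2⟩)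
        obtain ⟨hk1, hk2, hk3, hk4⟩ := hk
        have : e.val < d.val := hed
        omega
  -- the set of middle elements is nonempty
  have hTne : {i : Fin n | b < i ∧ i < c ∧ w d < w i ∧ w i < w a}.Nonempty := by
    apply Set.nonempty_of_ncard_ne_zero
    intro h0'
    rw [occContent, h0'] at heq
    omega
  obtain ⟨m, hm1, hm2, hm3, hm4⟩ := hTne
  -- b.val = 1
  have hb1 : b.val = 1 := by
    by_contra hcon
    have hb2 : 2 ≤ b.val := by have : a.val < b.val := hab; omega
    set e : Fin n := ⟨1, by omega⟩ with he
    have haeval : a.val < e.val := by simp [he, ha]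
    have hebval : e.val < b.val := by simp [he]; omega
    have hae : a < e := haeval
    have heb : e < b := hebval
    have hnot : ¬(w d < w e ∧ w e < w a) := fun h => absurd (C3 e h.1 h.2).1 (not_lt.2 heb.le)
    have hed : e ≠ d := by intro h; rw [h] at he; omega
    rcases lt_trichotomy (w e) (w d) with hwed | hwed | hwed
    · -- 4231 pattern (a, e, m, c)
      have hec : e ≠ c := ne_of_lt (heb.trans hbc)
      have hwce : w c < w e := lt_of_le_of_ne (Fin.le_def.2 (by omega)) fun h => hec (winj h).symm
      exact havoid ⟨a, e, m, c, hae, heb.trans hm1, hm2,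
        hwce, hwed.trans hm3, hm4⟩
    · exact hed (winj hwed)
    · have hwea : w a < w e := by
        rcases lt_trichotomy (w e) (w a) with h' | h' | h'
        · exact absurd ⟨hwed, h'⟩ hnot
        · exact absurd (winj h') (Ne.symm (ne_of_lt hae))
        · exact h'
      have hweb : w e < w b := lt_of_le_of_ne (Fin.le_def.2 (by have := (w e).isLt; omega))
        fun h => (ne_of_lt heb) (winj h)
      have hk := key e b c d ⟨heb, hbc, hcd, hcd', hwed, hweb⟩
        (fun k hk => ⟨hk.1, hk.2.1, hk.2.2.1, (C1 k hk.1 hk.2.1).2⟩)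
      have : e.val = 0 := hk.1
      simp [he] at this
  -- c.val = n - 2
  have hc2 : c.val = n - 2 := by
    have hcd2 : c.val < d.val := hcd
    by_contra hcon
    have hc3 : c.val ≤ n - 3 := by omega
    set e : Fin n := ⟨n - 2, by omega⟩ with he
    have hce : c < e := (by simp [he]; omega : c.val < e.val)
    have hed : e < d := (by simp [he]; omega : e.val < d.val)
    have hnot : ¬(w d < w e ∧ w e < w a) := fun h => absurd (C3 e h.1 h.2).2 (not_lt.2 hce.le)
    have hea : e ≠ a := by intro h; rw [h] at he; omega
    rcases lt_trichotomy (w e) (w d) with hwed | hwed | hwed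
    · have hk := key a b e d ⟨hab, hbc.trans hce, hed, hwed, hda, hab'⟩
        (fun k hk => ⟨hk.1, (C3 k hk.2.2.1 hk.2.2.2).2, hk.2.2⟩)
      obtain ⟨hk1, hk2, hk3, hk4⟩ := hk
      have hec : e ≠ c := ne_of_gt hce
      exact hec (winj (Fin.ext (by omega : (w e).val = (w c).val)))
    · exact (ne_of_lt hed) (winj hwed)
    · have hwae : w a < w e := by
        rcases lt_trichotomy (w e) (w a) with h' | h' | h'
        · exact absurd ⟨hwed, h'⟩ hnot
        · exact absurd (winj h') hea
        · exact h'
      have heb : e ≠ b := ne_of_gt (hbc.trans hce)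
      have hweb : w e < w b := lt_of_le_of_ne (Fin.le_def.2 (by have := (w e).isLt; omega))
        fun h => heb (winj h)
      exact havoid ⟨b, m, e, d, hm1, hm2.trans hce, hed, hm3, hm4.trans hwae, hweb⟩
  -- w d has value 1
  have hwd1 : (w d).val = 1 := by
    have h0' : 0 < (w d).val := by have : (w c).val < (w d).val := hcd'; omega
    by_contra hcon
    have h2' : 2 ≤ (w d).val := by omega
    set e : Fin n := w.symm ⟨1, by omega⟩ with he
    have hwe : (w e).val = 1 := by rw [he, Equiv.apply_symm_apply]
    have hda' : (w d).val < (w a).val := hda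
    have hea : e ≠ a := fun h => by rw [h] at hwe; omega
    have heb : e ≠ b := fun h => by rw [h, hb] at hwe; omega
    have hec : e ≠ c := fun h => by rw [h, hc] at hwe; omega
    have hed : e ≠ d := fun h => by rw [h] at hwe; omega
    have heval : 2 ≤ e.val ∧ e.val ≤ n - 3 := by
      have h1 : e.val ≠ 0 := fun h => hea (Fin.ext (by omega))
      have h2 : e.val ≠ 1 := fun h => heb (Fin.ext (by omega))
      have h3 : e.val ≠ n - 2 := fun h => hec (Fin.ext (by omega))
      have h4 : e.val ≠ n - 1 := fun h => hed (Fin.ext (by omega))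
      have := e.isLt
      omega
    have hbe : b < e := (by omega : b.val < e.val)
    have hec' : e < c := (by omega : e.val < c.val)
    have := (C1 e hbe hec').1
    have : (w d).val < (w e).val := this
    omega
  -- w a has value n - 2
  have hwa2 : (w a).val = n - 2 := by
    have h0' : (w a).val < n - 1 := by have : (w a).val < (w b).val := hab'; omega
    by_contra hcon
    have h2' : (w a).val ≤ n - 3 := by omega
    set e : Fin n := w.symm ⟨n - 2, by omega⟩ with he
    have hwe : (w e).val = n - 2 := by rw [he, Equiv.apply_symm_apply]
    have hda' : (w d).val < (w a).val := hda
    have hea : e ≠ a := fun h => by rw [h] at hwe; omega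
    have heb : e ≠ b := fun h => by rw [h, hb] at hwe; omega
    have hec : e ≠ c := fun h => by rw [h, hc] at hwe; omega
    have hed : e ≠ d := fun h => by rw [h] at hwe; omega
    have heval : 2 ≤ e.val ∧ e.val ≤ n - 3 := by
      have h1 : e.val ≠ 0 := fun h => hea (Fin.ext (by omega))
      have h2 : e.val ≠ 1 := fun h => heb (Fin.ext (by omega))
      have h3 : e.val ≠ n - 2 := fun h => hec (Fin.ext (by omega))
      have h4 : e.val ≠ n - 1 := fun h => hed (Fin.ext (by omega))
      have := e.isLt
      omega
    have hbe : b < e := (by omega : b.val < e.val)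
    have hec' : e < c := (by omega : e.val < c.val)
    have := (C1 e hbe hec').2
    have : (w e).val < (w a).val := this
    omega
  -- the middle values
  have C7 : ∀ i : Fin n, b < i → i < c → (w i).val = n - 1 - i.val := by
    intro i hbi hic
    have hi1 : b.val < i.val := hbi
    have hi2 : i.val < c.val := hic
    have hwi1 : (w d).val < (w i).val := (C1 i hbi hic).1
    have hwi2 : (w i).val < (w a).val := (C1 i hbi hic).2
    have hsub1 : (Finset.Ioo b i).image w ⊆ Finset.Ioo (w i) (w a) := by
      intro v hv
      simp only [Finset.mem_image, Finset.mem_Ioo] at hv ⊢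
      obtain ⟨k, ⟨hk1, hk2⟩, rfl⟩ := hv
      exact ⟨C2 k i hk1 hk2 hic, (C1 k hk1 (hk2.trans hic)).2⟩
    have hsub2 : (Finset.Ioo i c).image w ⊆ Finset.Ioo (w d) (w i) := by
      intro v hv
      simp only [Finset.mem_image, Finset.mem_Ioo] at hv ⊢
      obtain ⟨k, ⟨hk1, hk2⟩, rfl⟩ := hv
      exact ⟨(C1 k (hbi.trans hk1) hk2).1, C2 i k hbi hk1 hk2⟩
    have h1 := Finset.card_le_card hsub1
    have h2 := Finset.card_le_card hsub2
    rw [Finset.card_image_of_injective _ winj, Fin.card_Ioo, Fin.card_Ioo] at h1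
    rw [Finset.card_image_of_injective _ winj, Fin.card_Ioo, Fin.card_Ioo] at h2
    omega
  refine ⟨?_, ?_, ?_, ?_, ?_⟩
  · have : (⟨0, by omega⟩ : Fin n) = a := Fin.ext (show (0 : ℕ) = a.val from ha.symm)
    rw [this, hwa2]
  · have : (⟨1, by omega⟩ : Fin n) = b := Fin.ext (show (1 : ℕ) = b.val from hb1.symm)
    rw [this, hb]
  · have : (⟨n - 2, by omega⟩ : Fin n) = c := Fin.ext (show (n - 2 : ℕ) = c.val from hc2.symm)
    rw [this, hc]
  · have : (⟨n - 1, by omega⟩ : Fin n) = d := Fin.ext (show (n - 1 : ℕ) = d.val from hd.symm)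
    rw [this, hwd1]
  · intro i hi1 hi2
    exact C7 i ((by omega : b.val < i.val) : b < i) ((by omega : i.val < c.val) : i < c)
end
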